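/- arXiv:1504.02121 — 9 statements merged into one kernel-verified Lean document; each statement's English description precedes it below -/
import Mathlib

section
/- Let 𝔸 be a finite algebra that is not switchable. Then for every r there exists a nice relation in Inv(𝔸) of arity m ≥ r. -/
/-- An algebra: a carrier type `A` together with an indexed family of finitary operations. -/
structure MyAlgebra (A : Type) where
  ι : Type
  arity : ι → ℕ
  op : ∀ i : ι, (Fin (arity i) → A) → A

namespace MyAlgebra

variable {A : Type}

/-- A set of `n`-tuples is closed under coordinatewise application of all operations. -/
def Closed (𝔸 : MyAlgebra A) {n : ℕ} (S : Set (Fin n → A)) : Prop :=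
  ∀ i : 𝔸.ι, ∀ γ : Fin (𝔸.arity i) → (Fin n → A),
    (∀ j, γ j ∈ S) → (fun t : Fin n => 𝔸.op i (fun j => γ j t)) ∈ S

/-- The subalgebra of `𝔸^n` generated by `X`. -/
def gen (𝔸 : MyAlgebra A) {n : ℕ} (X : Set (Fin n → A)) : Set (Fin n → A) :=
  ⋂₀ {S : Set (Fin n → A) | X ⊆ S ∧ 𝔸.Closed S}

/-- Polynomially generated powers. -/
def PGP (𝔸 : MyAlgebra A) : Prop :=
  ∃ p : Polynomial ℕ, ∀ n : ℕ, ∃ X : Finset (Fin n → A),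
    X.card ≤ p.eval n ∧ 𝔸.gen (X : Set (Fin n → A)) = Set.univ

/-- Exponentially generated powers. -/
def EGP (𝔸 : MyAlgebra A) : Prop :=
  ∃ b C : ℝ, 1 < b ∧ 0 < C ∧ ∀ n : ℕ, ∀ X : Finset (Fin n → A),
    𝔸.gen (X : Set (Fin n → A)) = Set.univ → C * b ^ n ≤ (X.card : ℝ)

/-- Every operation is idempotent. -/
def Idempotent (𝔸 : MyAlgebra A) : Prop :=
  ∀ i : 𝔸.ι, ∀ a : A, 𝔸.op i (fun _ => a) = a

end MyAlgebra

/-- The number of switches of a tuple: indices `i` with `a i ≠ a (i+1)`,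
encoded as pairs of consecutive indices. -/
def numSwitches {A : Type} [DecidableEq A] {n : ℕ} (a : Fin n → A) : ℕ :=
  (Finset.univ.filter (fun p : Fin n × Fin n =>
    (p.2 : ℕ) = (p.1 : ℕ) + 1 ∧ a p.1 ≠ a p.2)).card

/-- `𝔸` is switchable: for some `r`, every power is generated by tuples with at most `r` switches. -/
def MyAlgebra.Switchable {A : Type} [DecidableEq A] (𝔸 : MyAlgebra A) : Prop :=
  ∃ r : ℕ, ∀ n : ℕ, 𝔸.gen {a : Fin n → A | numSwitches a ≤ r} = Set.univ

/-- A nice relation: not full, and contains every tuple with two equal consecutive entries. -/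
def Nice {A : Type} {m : ℕ} (ρ : Set (Fin m → A)) : Prop :=
  ρ ≠ Set.univ ∧ ∀ c : Fin m → A,
    (∃ i : ℕ, ∃ h : i + 1 < m, c ⟨i, by omega⟩ = c ⟨i + 1, h⟩) → c ∈ ρ

/-- `D_{A,m}`: tuples of length `2m` where some pair `(a_{2i+1}, a_{2i+2})` is equal. -/
def Drel (A : Type) (m : ℕ) : Set (Fin (2 * m) → A) :=
  {a | ∃ i : ℕ, ∃ h : 2 * i + 1 < 2 * m, a ⟨2 * i, by omega⟩ = a ⟨2 * i + 1, h⟩}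

/-- `f` preserves the relation `σ`. -/
def Preserves {A : Type} {s m : ℕ} (f : (Fin s → A) → A) (σ : Set (Fin m → A)) : Prop :=
  ∀ γ : Fin s → (Fin m → A), (∀ j, γ j ∈ σ) → (fun t : Fin m => f (fun j => γ j t)) ∈ σ

/-- `f` is `αβ`-projective. -/
def ABProjective {A : Type} (α β : Set A) {s : ℕ} (f : (Fin s → A) → A) : Prop :=
  ∃ j : Fin s, ∀ a : Fin s → A, ∀ S ∈ ({α, β} : Set (Set A)), a j ∈ S → f a ∈ S

/-- `σ_n(x₁,…,x_{2n}) ⇔ ρ(x₁,x₂) ∨ … ∨ ρ(x_{2n-1},x_{2n})`. -/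
def sigmaRel {A : Type} (ρ : Set (A × A)) (n : ℕ) : Set (Fin (2 * n) → A) :=
  {t | ∃ i : ℕ, ∃ h : 2 * i + 1 < 2 * n, (t ⟨2 * i, by omega⟩, t ⟨2 * i + 1, h⟩) ∈ ρ}

/-! If `S ⊊ A^n` is a subalgebra containing every tuple with at most `r` switches, write some
`b ∉ S` as `c ∘ g` with `c : Fin m → A` and `g : Fin n → Fin m` monotone without skipped values,
choosing `m` minimal. Then `ρ = {c | c ∘ g ∈ S}` is invariant and not full. A tuple with two equal
neighbours factors through the degeneracy `Fin.predAbove` into `A^(m-1)`, so minimality puts it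
in `ρ`; and `c ∘ g ∉ S` has at most `m - 1` switches, so `m > r`. -/

namespace MyAlgebra

variable {A : Type} (𝔸 : MyAlgebra A) {n : ℕ}

theorem subset_gen (X : Set (Fin n → A)) : X ⊆ 𝔸.gen X :=
  fun _ ha _ hS => hS.1 ha

theorem closed_gen (X : Set (Fin n → A)) : 𝔸.Closed (𝔸.gen X) :=
  fun i γ hγ _ hS => hS.2 i γ fun j => hγ j _ hS

variable {𝔸}

theorem Closed.preimage_comp {m : ℕ} {S : Set (Fin n → A)} (hS : 𝔸.Closed S) (g : Fin n → Fin m) :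
    𝔸.Closed {c : Fin m → A | c ∘ g ∈ S} :=
  fun i γ hγ => hS i (fun j => γ j ∘ g) hγ

end MyAlgebra

def StepMonotone {n m : ℕ} (g : Fin n → Fin m) : Prop :=
  Monotone g ∧ ∀ s t : Fin n, (t : ℕ) = s + 1 → (g t : ℕ) ≤ g s + 1

theorem stepMonotone_id (n : ℕ) : StepMonotone (id : Fin n → Fin n) :=
  ⟨monotone_id, fun _ _ h => h.le⟩

theorem StepMonotone.comp {n m k : ℕ} {h : Fin m → Fin k} {g : Fin n → Fin m}
    (hh : StepMonotone h) (hg : StepMonotone g) : StepMonotone (h ∘ g) := by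
  refine ⟨hh.1.comp hg.1, fun s t hst => ?_⟩
  have hle : g s ≤ g t := hg.1 (Fin.le_def.2 (by omega))
  rcases hle.eq_or_lt with heq | hlt
  · simp [Function.comp, heq]
  · exact hh.2 _ _ (by have := hg.2 s t hst; rw [Fin.lt_def] at hlt; omega)

theorem stepMonotone_predAbove {m : ℕ} (p : Fin m) : StepMonotone p.predAbove := by
  refine ⟨Fin.predAbove_right_monotone p, fun s t hst => ?_⟩
  simp only [Fin.predAbove]
  split_ifs <;> simp_all <;> omega

theorem exists_stepMonotone_factor_of_adjacent_eq {A : Type} {m : ℕ} {c : Fin m → A}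
    (hc : ∃ i : ℕ, ∃ h : i + 1 < m, c ⟨i, by omega⟩ = c ⟨i + 1, h⟩) :
    ∃ (c' : Fin (m - 1) → A) (g : Fin m → Fin (m - 1)), StepMonotone g ∧ c = c' ∘ g := by
  obtain ⟨i, hi, hci⟩ := hc
  obtain ⟨k, rfl⟩ : ∃ k, m = k + 1 := ⟨m - 1, by omega⟩
  let p : Fin k := ⟨i, by omega⟩
  refine ⟨c ∘ p.castSucc.succAbove, p.predAbove, stepMonotone_predAbove p, funext fun j => ?_⟩
  by_cases hj : j = p.castSucc
  · subst hj
    simp only [Function.comp_apply, Fin.predAbove_castSucc_self, Fin.succAbove_castSucc_self]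
    exact hci
  · simp [Fin.succAbove_predAbove hj]

section Switches

variable {A : Type} [DecidableEq A]

theorem numSwitches_le_sub_one {m : ℕ} (c : Fin m → A) : numSwitches c ≤ m - 1 := by
  unfold numSwitches
  calc _ ≤ (Finset.range (m - 1)).card := by
        refine Finset.card_le_card_of_injOn (fun p => (p.1 : ℕ)) ?_ ?_
        · intro p hp
          simp only [Finset.coe_filter, Finset.mem_univ, true_and, Set.mem_ofPred_eq] at hp
          simp only [Finset.coe_range, Set.mem_Iio]
          omega
        · intro p hp q hq hpq
          simp only [Finset.coe_filter, Finset.mem_univ, true_and, Set.mem_ofPred_eq] at hp hq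
          ext <;> simp_all
    _ = m - 1 := Finset.card_range _

theorem numSwitches_comp_le {n m : ℕ} {g : Fin n → Fin m} (hg : StepMonotone g) (c : Fin m → A) :
    numSwitches (c ∘ g) ≤ numSwitches c := by
  unfold numSwitches
  have lt_of_switch : ∀ p : Fin n × Fin n, (p.2 : ℕ) = p.1 + 1 → c (g p.1) ≠ c (g p.2) →
      g p.1 < g p.2 := fun p hadj hne =>
    (hg.1 (Fin.le_def.2 (by omega))).lt_of_ne fun h => hne (by rw [h])
  refine Finset.card_le_card_of_injOn (fun p => (g p.1, g p.2)) ?_ ?_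
  · intro p hp
    simp only [Finset.coe_filter, Finset.mem_univ, true_and, Set.mem_ofPred_eq,
      Function.comp_apply] at hp ⊢
    have hlt := Fin.lt_def.1 (lt_of_switch p hp.1 hp.2)
    exact ⟨by have := hg.2 _ _ hp.1; omega, hp.2⟩
  · have not_earlier : ∀ p q : Fin n × Fin n, (p.2 : ℕ) = p.1 + 1 → c (g p.1) ≠ c (g p.2) →
        g p.1 = g q.1 → ¬ p.1 < q.1 := fun p q hadj hne h1 hpq =>
      (lt_of_switch p hadj hne).not_ge (h1 ▸ hg.1 (Fin.le_def.2 (by omega)))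
    intro p hp q hq hpq
    simp only [Finset.coe_filter, Finset.mem_univ, true_and, Set.mem_ofPred_eq,
      Function.comp_apply, Prod.mk.injEq] at hp hq hpq
    have h1 : p.1 = q.1 := le_antisymm (not_lt.1 (not_earlier q p hq.1 hq.2 hpq.1.symm))
      (not_lt.1 (not_earlier p q hp.1 hp.2 hpq.1))
    exact Prod.ext h1 (Fin.ext (by rw [hp.1, hq.1, h1]))

end Switches

theorem MyAlgebra.Closed.exists_nice_of_ne_univ {A : Type} [DecidableEq A] {𝔸 : MyAlgebra A}
    {n r : ℕ} {S : Set (Fin n → A)} (hS : 𝔸.Closed S) (hS_ne : S ≠ Set.univ)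
    (hr : ∀ a : Fin n → A, numSwitches a ≤ r → a ∈ S) :
    ∃ m : ℕ, r < m ∧ ∃ ρ : Set (Fin m → A), Nice ρ ∧ 𝔸.Closed ρ := by
  classical
  obtain ⟨b, hb⟩ := (Set.ne_univ_iff_exists_notMem S).1 hS_ne
  have hP : ∃ m, ∃ g : Fin n → Fin m, StepMonotone g ∧ ∃ c : Fin m → A, c ∘ g ∉ S :=
    ⟨n, id, stepMonotone_id n, b, hb⟩
  obtain ⟨g, hg, c₀, hc₀⟩ := Nat.find_spec hP
  refine ⟨Nat.find hP, ?_, {c | c ∘ g ∈ S},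
    ⟨(Set.ne_univ_iff_exists_notMem _).2 ⟨c₀, hc₀⟩, ?_⟩, hS.preimage_comp g⟩
  · by_contra! hm
    exact hc₀ (hr _ ((numSwitches_comp_le hg c₀).trans ((numSwitches_le_sub_one c₀).trans
      (by omega))))
  · intro c hc
    obtain ⟨c', k, hk, rfl⟩ := exists_stepMonotone_factor_of_adjacent_eq hc
    obtain ⟨i, hi, -⟩ := hc
    by_contra hcS
    have := Nat.find_min' hP ⟨k ∘ g, hk.comp hg, c', hcS⟩
    omega

theorem stmt_5_general {A : Type} [DecidableEq A] (𝔸 : MyAlgebra A)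
    (h : ¬ 𝔸.Switchable) :
    ∀ r : ℕ, ∃ m : ℕ, r ≤ m ∧ ∃ ρ : Set (Fin m → A), Nice ρ ∧ 𝔸.Closed ρ := by
  intro r
  obtain ⟨n, hn⟩ := not_forall.1 (not_exists.1 h r)
  obtain ⟨m, hrm, hρ⟩ := (𝔸.closed_gen _).exists_nice_of_ne_univ hn
    fun a ha => 𝔸.subset_gen _ ha
  exact ⟨m, hrm.le, hρ⟩

/-- if a finite algebra is not switchable, then for every `r` there is
a nice invariant relation of arity `m ≥ r`. -/
theorem stmt_5 {A : Type} [Fintype A] [DecidableEq A] (𝔸 : MyAlgebra A)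
    (h : ¬ 𝔸.Switchable) :
    ∀ r : ℕ, ∃ m : ℕ, r ≤ m ∧ ∃ ρ : Set (Fin m → A), Nice ρ ∧ 𝔸.Closed ρ :=
  stmt_5_general 𝔸 h
end

section
/- Let 𝔸 be a finite algebra with |A| = k, let n be a positive integer, and let ρ ∈ Inv(𝔸) be a nice relation of arity m with m > 2k²·n². Then there exists a relation σ ∈ Inv(𝔸) of arity 2n + k such that σ ≠ A^{2n+k} and for all c_1,…,c_n, d_1,…,d_n, e_1,…,e_k ∈ A: if there exist i, j ∈ {1,…,n} with c_i = d_j, then (c_1,…,c_n, d_1,…,d_n, e_1,…,e_k) ∈ σ. -/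
/-!
Pick `c ∉ ρ`; by niceness no two consecutive entries of `c` agree. By pigeonhole some pair
`(a, b)` occurs as `(c p, c (p+1))` at `n²` positions `p = ξ (i, j)`, and `a ≠ b` makes these
pairs of positions pairwise disjoint. Reindex `ρ` along `φ : Fin m → Fin (2n + k)` sending
`ξ (i, j) ↦ i`, `ξ (i, j) + 1 ↦ n + j` and every other position `p` to the coordinate of the last
block that enumerates the value `c p`. Then `σ = {t | t ∘ φ ∈ ρ}` is invariant; it misses the tuple
that is `a` on the first block, `b` on the second and enumerates `A` on the last, as this tuple
pulls back to `c`; and it contains every `t` with `t i = t (n + j)`, since `t ∘ φ` then repeats at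
`ξ (i, j)`.
-/

open Function

theorem MyAlgebra.Closed.preimage_comp_s6 {A : Type} {𝔸 : MyAlgebra A} {m N : ℕ}
    {ρ : Set (Fin m → A)} (hρ : 𝔸.Closed ρ) (φ : Fin m → Fin N) :
    𝔸.Closed {t : Fin N → A | t ∘ φ ∈ ρ} :=
  fun i γ hγ => hρ i (fun j => γ j ∘ φ) hγ

theorem Nice.mem_of_castSucc_eq_succ {A : Type} {m : ℕ} {ρ : Set (Fin (m + 1) → A)}
    (hρ : Nice ρ) {c : Fin (m + 1) → A} (p : Fin m) (h : c p.castSucc = c p.succ) : c ∈ ρ :=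
  hρ.2 c ⟨p, by omega, h⟩

theorem Fintype.exists_embedding_fiber {α β γ : Type*} [Fintype α] [Fintype β] [Fintype γ]
    [Nonempty β] (g : α → β) (h : card β * card γ ≤ card α) :
    ∃ y : β, ∃ ξ : γ ↪ α, ∀ x, g (ξ x) = y := by
  classical
  obtain ⟨y, hy⟩ := Fintype.exists_le_card_fiber_of_mul_le_card g h
  obtain ⟨ξ⟩ := Embedding.nonempty_of_card_le (α := γ)
    (β := {x // x ∈ Finset.univ.filter (g · = y)}) (by rwa [Fintype.card_coe])
  exact ⟨y, ξ.trans (Embedding.subtype _), fun x => (Finset.mem_filter.1 (ξ x).2).2⟩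

theorem Function.exists_lift_extend {α β γ δ : Type*} {c : α → δ} {t₀ : β → δ}
    (ht₀ : Surjective t₀) {P : γ → α} (hP : Injective P) {ψ : γ → β}
    (hψ : ∀ x, t₀ (ψ x) = c (P x)) :
    ∃ φ : α → β, t₀ ∘ φ = c ∧ φ ∘ P = ψ := by
  refine ⟨extend P ψ (surjInv ht₀ ∘ c), funext fun p => ?_, funext (hP.extend_apply _ _)⟩
  by_cases hp : ∃ x, P x = p
  · obtain ⟨x, rfl⟩ := hp
    simp [hP.extend_apply, hψ]
  · simp [extend_apply' _ _ _ hp, surjInv_eq]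

theorem exists_reindex_of_castSucc_ne_succ {A : Type} [Fintype A] {k : ℕ} (hk : Fintype.card A = k)
    {n m : ℕ} (hm : k ^ 2 * n ^ 2 ≤ m) (c : Fin (m + 1) → A)
    (hc : ∀ p : Fin m, c p.castSucc ≠ c p.succ) :
    ∃ φ : Fin (m + 1) → Fin (2 * n + k), ∃ t₀ : Fin (2 * n + k) → A, t₀ ∘ φ = c ∧
      ∀ i j : Fin n, ∃ p : Fin m, φ p.castSucc = ⟨i, by omega⟩ ∧ φ p.succ = ⟨n + j, by omega⟩ := by
  have : Nonempty A := ⟨c 0⟩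
  obtain ⟨⟨a, b⟩, ξ, hξ⟩ := Fintype.exists_embedding_fiber (γ := Fin n × Fin n)
    (fun p : Fin m => (c p.castSucc, c p.succ)) (by simpa [hk, sq, mul_mul_mul_comm] using hm)
  simp only [Prod.mk.injEq] at hξ
  let e := Fintype.equivFinOfCardEq hk
  let t₀ : Fin (2 * n + k) → A := fun v =>
    if v < n then a else if h : v < 2 * n then b else e.symm ⟨v - 2 * n, by omega⟩
  have ht₀ : Surjective t₀ := fun x => ⟨⟨2 * n + e x, by omega⟩, by
    simp only [t₀]
    rw [if_neg (by omega), dif_neg (by omega)]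
    simp⟩
  have hLR : Injective (Sum.elim (fun x => (ξ x).castSucc) (fun x => (ξ x).succ)) := by
    refine (Fin.castSucc_injective _ |>.comp ξ.injective).sumElim
      (Fin.succ_injective _ |>.comp ξ.injective) fun x y hxy => hc (ξ y) ?_
    -- `(ξ y).succ = (ξ x).castSucc` carries the value `a` as well
    rw [(hξ y).1, ← (hξ x).1]
    exact congrArg c hxy
  obtain ⟨φ, hφ, hφLR⟩ := exists_lift_extend (c := c) ht₀ hLR
    (ψ := Sum.elim (fun x => ⟨x.1, by omega⟩) (fun x => ⟨n + x.2, by omega⟩))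
    (by
      rintro (x | x)
      · simp [t₀, (hξ x).1]
      · simp only [t₀, Sum.elim_inr]
        rw [if_neg (by omega), dif_pos (by omega), (hξ x).2])
  exact ⟨φ, t₀, hφ, fun i j =>
    ⟨ξ (i, j), congrFun hφLR (Sum.inl (i, j)), congrFun hφLR (Sum.inr (i, j))⟩⟩

/-- from a nice invariant relation of large arity one obtains an invariant
relation `σ` of arity `2n + k` that is not full and contains all tuples whose first block
and second block share a common value. -/
theorem stmt_6 {A : Type} [Fintype A] (𝔸 : MyAlgebra A) (k : ℕ)
    (hk : Fintype.card A = k) (n : ℕ) (m : ℕ)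
    (hm : 2 * k ^ 2 * n ^ 2 < m)
    (ρ : Set (Fin m → A)) (hρ : Nice ρ) (hinv : 𝔸.Closed ρ) :
    ∃ σ : Set (Fin (2 * n + k) → A), 𝔸.Closed σ ∧ σ ≠ Set.univ ∧
      ∀ t : Fin (2 * n + k) → A,
        (∃ i j : Fin n, t ⟨(i : ℕ), by have := i.isLt; omega⟩
                      = t ⟨n + (j : ℕ), by have := j.isLt; omega⟩) →
        t ∈ σ := by
  obtain ⟨m, rfl⟩ : ∃ m', m = m' + 1 := ⟨m - 1, by omega⟩
  obtain ⟨c, hc⟩ : ∃ c, c ∉ ρ := by simpa [Set.eq_univ_iff_forall] using hρ.1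
  obtain ⟨φ, t₀, hφ, hpairs⟩ := exists_reindex_of_castSucc_ne_succ hk (n := n)
    (by rw [mul_assoc] at hm; omega) c fun p h => hc (hρ.mem_of_castSucc_eq_succ p h)
  refine ⟨{t | t ∘ φ ∈ ρ}, hinv.preimage_comp_s6 φ, fun huniv => hc ?_, ?_⟩
  · have ht₀ : t₀ ∈ {t | t ∘ φ ∈ ρ} := huniv ▸ Set.mem_univ t₀
    rwa [Set.mem_ofPred_eq, hφ] at ht₀
  · rintro t ⟨i, j, hij⟩
    obtain ⟨p, hpi, hpj⟩ := hpairs i j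
    exact hρ.mem_of_castSucc_eq_succ p (by simp [hpi, hpj, hij])
end

section
/- Let 𝔸 be a finite algebra with |A| = k. If for every r there exists a nice relation in Inv(𝔸) of arity at least r, then ⟨D_{A,n}⟩_𝔸 ≠ A^{2n} for every n ≥ k. -/
lemma domino_cover : ∀ m : ℕ, ∀ n : ℕ, ∀ Q : Finset ℕ, 2 * n ≤ m → Q.card ≤ n →
    (∀ q ∈ Q, q < m) →
    ∃ D : Finset ℕ, D.card = n ∧ (∀ d ∈ D, d + 1 < m) ∧
      (∀ d ∈ D, ∀ d' ∈ D, d ≠ d' → d + 2 ≤ d' ∨ d' + 2 ≤ d) ∧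
      (∀ q ∈ Q, ∃ d ∈ D, q = d ∨ q = d + 1) := by
  intro m
  induction m using Nat.strong_induction_on with
  | _ m IH =>
    intro n Q hmn hQn hQm
    match n with
    | 0 =>
      have hQ : Q = ∅ := Finset.card_eq_zero.mp (Nat.le_zero.mp hQn)
      subst hQ
      exact ⟨∅, by simp, by simp, by simp, by simp⟩
    | n + 1 =>
      have hm2 : 2 ≤ m := by omega
      by_cases htop : (m - 2) ∈ Q ∨ (m - 1) ∈ Q
      · -- place top domino (m-2, m-1)
        have hQ'card : ((Q.erase (m-1)).erase (m-2)).card ≤ n := by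
          rcases htop with hmem | hmem
          · have hmem2 : (m-2) ∈ Q.erase (m-1) := Finset.mem_erase.mpr ⟨by omega, hmem⟩
            have h1 := Finset.card_erase_of_mem hmem2
            have h2 := Finset.card_erase_le (s := Q) (a := m-1)
            omega
          · have h1 := Finset.card_erase_of_mem hmem
            have h2 := Finset.card_erase_le (s := Q.erase (m-1)) (a := m-2)
            omega
        obtain ⟨D', hc, hb, hgap, hcov⟩ := IH (m-2) (by omega) n ((Q.erase (m-1)).erase (m-2))
          (by omega) hQ'card
          (fun q hq => by
            have h1 := Finset.mem_erase.mp hq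
            have h2 := Finset.mem_erase.mp h1.2
            have := hQm q h2.2
            have e1 := h1.1
            have e2 := h2.1
            omega)
        refine ⟨insert (m-2) D', ?_, ?_, ?_, ?_⟩
        · rw [Finset.card_insert_of_notMem (fun hmem => by have := hb _ hmem; omega)]
          omega
        · intro d hd
          rcases Finset.mem_insert.mp hd with rfl | hd
          · omega
          · have := hb d hd; omega
        · intro d hd d' hd' hne
          rcases Finset.mem_insert.mp hd with rfl | hd <;>
            rcases Finset.mem_insert.mp hd' with rfl | hd'
          · exact absurd rfl hne
          · have := hb d' hd'; omega
          · have := hb d hd; omega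
          · exact hgap d hd d' hd' hne
        · intro q hq
          by_cases hq1 : q = m - 2 ∨ q = m - 1
          · exact ⟨m-2, Finset.mem_insert_self _ _, by omega⟩
          · push_neg at hq1
            have hq' : q ∈ (Q.erase (m-1)).erase (m-2) :=
              Finset.mem_erase.mpr ⟨hq1.1, Finset.mem_erase.mpr ⟨hq1.2, hq⟩⟩
            obtain ⟨d, hd, he⟩ := hcov q hq'
            exact ⟨d, Finset.mem_insert_of_mem hd, he⟩
      · push_neg at htop
        by_cases hsm : 2 * (n+1) ≤ m - 2
        · obtain ⟨D', hc, hb, hgap, hcov⟩ := IH (m-2) (by omega) (n+1) Q hsm hQn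
            (fun q hq => by
              have h1 : q ≠ m - 2 := fun hqq => htop.1 (hqq ▸ hq)
              have h2 : q ≠ m - 1 := fun hqq => htop.2 (hqq ▸ hq)
              have := hQm q hq
              omega)
          exact ⟨D', hc, fun d hd => by have := hb d hd; omega, hgap, hcov⟩
        · -- m = 2n+2 or 2n+3; use even tiling
          refine ⟨(Finset.range (n+1)).image (fun i => 2 * i), ?_, ?_, ?_, ?_⟩
          · rw [Finset.card_image_of_injective _ (fun a b hab => by omega)]
            simp
          · intro d hd
            obtain ⟨i, hi, rfl⟩ := Finset.mem_image.mp hd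
            have := Finset.mem_range.mp hi
            omega
          · intro d hd d' hd' hne
            obtain ⟨i, hi, rfl⟩ := Finset.mem_image.mp hd
            obtain ⟨i', hi', rfl⟩ := Finset.mem_image.mp hd'
            omega
          · intro q hq
            have h1 : q ≠ m - 2 := fun hqq => htop.1 (hqq ▸ hq)
            have h2 : q ≠ m - 1 := fun hqq => htop.2 (hqq ▸ hq)
            have h3 := hQm q hq
            exact ⟨2 * (q / 2), Finset.mem_image.mpr ⟨q/2, Finset.mem_range.mpr (by omega), rfl⟩,
              by omega⟩

/-- if for every `r` there is a nice invariant relation of arity `≥ r`,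
then `⟨D_{A,n}⟩ ≠ A^{2n}` for every `n ≥ |A|`. -/
theorem stmt_8 {A : Type} [Fintype A] (𝔸 : MyAlgebra A) (k : ℕ)
    (hk : Fintype.card A = k)
    (h : ∀ r : ℕ, ∃ m : ℕ, r ≤ m ∧ ∃ ρ : Set (Fin m → A), Nice ρ ∧ 𝔸.Closed ρ) :
    ∀ n : ℕ, k ≤ n → 𝔸.gen (Drel A n) ≠ Set.univ := by
  classical
  intro n hn
  obtain ⟨m, hm, ρ, ⟨hρne, hρnice⟩, hρcl⟩ := h (2 * n)
  -- a tuple outside ρ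
  obtain ⟨c, hc⟩ : ∃ c : Fin m → A, c ∉ ρ := by
    by_contra hcc
    push_neg at hcc
    exact hρne (Set.eq_univ_of_forall hcc)
  -- pick an occurrence position for each value
  obtain ⟨pick, hpick⟩ : ∃ pick : A → ℕ, ∀ v, (∃ j : Fin m, c j = v) →
      ∃ hv : pick v < m, c ⟨pick v, hv⟩ = v := by
    refine ⟨fun v => if hv : ∃ j : Fin m, c j = v then ((hv.choose : Fin m) : ℕ) else 0, ?_⟩
    intro v hv
    simp only [dif_pos hv]
    exact ⟨hv.choose.isLt, by simpa using hv.choose_spec⟩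
  set V : Finset A := Finset.image c Finset.univ with hV
  set Q : Finset ℕ := V.image pick with hQ
  have hVcard : V.card ≤ k := hk ▸ Finset.card_le_univ V
  have hQcard : Q.card ≤ n := le_trans (le_trans Finset.card_image_le hVcard) hn
  have hQm : ∀ q ∈ Q, q < m := by
    intro q hq
    obtain ⟨v, hv, rfl⟩ := Finset.mem_image.mp hq
    obtain ⟨j, _, hj⟩ := Finset.mem_image.mp hv
    obtain ⟨hlt, _⟩ := hpick v ⟨j, hj⟩
    exact hlt
  obtain ⟨D, hDcard, hDb, hDgap, hDcov⟩ := domino_cover m n Q hm hQcard hQm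
  -- enumerate D
  set e := D.orderIsoOfFin hDcard with he
  set dd : Fin n → ℕ := fun i => ((e i : D) : ℕ) with hdd
  have hdd_mem : ∀ i, dd i ∈ D := fun i => (e i).2
  have hdd_inj : ∀ i i', dd i = dd i' → i = i' := fun i i' hii =>
    e.injective (Subtype.ext hii)
  have hdd_surj : ∀ d ∈ D, ∃ i, dd i = d := fun d hd =>
    ⟨e.symm ⟨d, hd⟩, by simp [hdd]⟩
  have hdd_b : ∀ i, dd i + 1 < m := fun i => hDb _ (hdd_mem i)
  have hdd_gap : ∀ i i', i ≠ i' → dd i + 2 ≤ dd i' ∨ dd i' + 2 ≤ dd i := fun i i' hne =>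
    hDgap _ (hdd_mem i) _ (hdd_mem i') (fun hdd' => hne (hdd_inj _ _ hdd'))
  -- the index function on cells
  obtain ⟨idx, hidx0, hidx1⟩ : ∃ idx : ℕ → ℕ,
      (∀ i : Fin n, idx (dd i) = 2 * (i:ℕ)) ∧ (∀ i : Fin n, idx (dd i + 1) = 2 * (i:ℕ) + 1) := by
    refine ⟨fun x => if h1 : ∃ i : Fin n, dd i = x then 2 * ((h1.choose : Fin n) : ℕ)
      else if h2 : ∃ i : Fin n, dd i + 1 = x then 2 * ((h2.choose : Fin n) : ℕ) + 1 else 0,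
      ?_, ?_⟩
    · intro i
      have h1 : ∃ i' : Fin n, dd i' = dd i := ⟨i, rfl⟩
      simp only [dif_pos h1]
      rw [hdd_inj _ _ h1.choose_spec]
    · intro i
      have h1 : ¬ ∃ i' : Fin n, dd i' = dd i + 1 := by
        rintro ⟨i', hi'⟩
        have hne : i' ≠ i := by rintro rfl; omega
        rcases hdd_gap i' i hne with h' | h' <;> omega
      have h2 : ∃ i' : Fin n, dd i' + 1 = dd i + 1 := ⟨i, rfl⟩
      simp only [dif_neg h1, dif_pos h2]
      have hcs := h2.choose_spec
      rw [hdd_inj _ _ (by omega : dd h2.choose = dd i)]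
  have hidx_lt : ∀ x : ℕ, (∃ i : Fin n, x = dd i ∨ x = dd i + 1) → idx x < 2 * n := by
    rintro x ⟨i, rfl | rfl⟩
    · rw [hidx0]; have := i.isLt; omega
    · rw [hidx1]; have := i.isLt; omega
  -- kappa : send each position to a cell with the same value
  obtain ⟨κ, hκ1, hκ2⟩ : ∃ κ : Fin m → ℕ,
      (∀ j : Fin m, ∃ (i : Fin n) (hx : κ j < m),
        (κ j = dd i ∨ κ j = dd i + 1) ∧ c ⟨κ j, hx⟩ = c j) ∧
      (∀ j : Fin m, (∃ i : Fin n, (j:ℕ) = dd i ∨ (j:ℕ) = dd i + 1) → κ j = (j:ℕ)) := by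
    refine ⟨fun j => if hcell : ∃ i : Fin n, (j:ℕ) = dd i ∨ (j:ℕ) = dd i + 1
      then (j:ℕ) else pick (c j), ?_, ?_⟩
    · intro j
      by_cases hcell : ∃ i : Fin n, (j:ℕ) = dd i ∨ (j:ℕ) = dd i + 1
      · obtain ⟨i, hi⟩ := hcell
        refine ⟨i, ?_⟩
        simp only [dif_pos (⟨i, hi⟩ : ∃ i : Fin n, (j:ℕ) = dd i ∨ (j:ℕ) = dd i + 1)]
        exact ⟨j.isLt, hi, by simp⟩
      · simp only [dif_neg hcell]
        have hQmem : pick (c j) ∈ Q := by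
          rw [hQ]
          exact Finset.mem_image.mpr ⟨c j,
            Finset.mem_image.mpr ⟨j, Finset.mem_univ j, rfl⟩, rfl⟩
        obtain ⟨d, hd, hor⟩ := hDcov _ hQmem
        obtain ⟨i, rfl⟩ := hdd_surj d hd
        obtain ⟨hlt, hval⟩ := hpick (c j) ⟨j, rfl⟩
        exact ⟨i, hlt, hor, hval⟩
    · intro j hcell
      simp only [dif_pos hcell]
  have hgb : ∀ j : Fin m, idx (κ j) < 2 * n := by
    intro j
    obtain ⟨i, hx, hor, _⟩ := hκ1 j
    exact hidx_lt _ ⟨i, hor⟩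
  -- the main construction
  obtain ⟨a, g, hag, hpairs⟩ :
      ∃ (a : Fin (2*n) → A) (g : Fin m → Fin (2*n)),
        (∀ j, a (g j) = c j) ∧
        (∀ i : ℕ, ∀ hi : 2*i+1 < 2*n, ∃ (j : ℕ) (hj : j + 1 < m),
          (∀ p1 : j < m, g ⟨j, p1⟩ = ⟨2*i, by omega⟩) ∧ g ⟨j+1, hj⟩ = ⟨2*i+1, hi⟩) := by
    have hdiv : ∀ t : Fin (2*n), (t:ℕ)/2 < n := fun t => by have := t.isLt; omega
    refine ⟨fun t => c ⟨dd ⟨(t:ℕ)/2, hdiv t⟩ + (t:ℕ)%2,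
        by have := hdd_b ⟨(t:ℕ)/2, hdiv t⟩; omega⟩,
      fun j => ⟨idx (κ j), hgb j⟩, ?_, ?_⟩
    · intro j
      obtain ⟨i, hx, hor, hval⟩ := hκ1 j
      rw [← hval]
      beta_reduce
      rcases hor with h' | h'
      · have hidx : idx (κ j) = 2 * (i:ℕ) := by rw [h']; exact hidx0 i
        have h2 : idx (κ j) / 2 = (i : ℕ) := by omega
        have h3 : idx (κ j) % 2 = 0 := by omega
        congr 1
        apply Fin.ext
        simp only [h2, h3, Fin.eta]
        omega
      · have hidx : idx (κ j) = 2 * (i:ℕ) + 1 := by rw [h']; exact hidx1 i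
        have h2 : idx (κ j) / 2 = (i : ℕ) := by omega
        have h3 : idx (κ j) % 2 = 1 := by omega
        congr 1
        apply Fin.ext
        simp only [h2, h3, Fin.eta]
        omega
    · intro i hi
      have hin : i < n := by omega
      set i' : Fin n := ⟨i, hin⟩ with hi'
      refine ⟨dd i', hdd_b i', ?_, ?_⟩
      · intro p1
        apply Fin.ext
        show idx (κ ⟨dd i', p1⟩) = 2 * i
        rw [hκ2 ⟨dd i', p1⟩ ⟨i', Or.inl rfl⟩]
        show idx (dd i') = 2 * i
        rw [hidx0 i']
      · apply Fin.ext
        show idx (κ ⟨dd i' + 1, hdd_b i'⟩) = 2 * i + 1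
        rw [hκ2 ⟨dd i' + 1, hdd_b i'⟩ ⟨i', Or.inr rfl⟩]
        show idx (dd i' + 1) = 2 * i + 1
        rw [hidx1 i']
  -- the separating closed set
  have hsub : 𝔸.gen (Drel A n) ⊆ {b : Fin (2*n) → A | (fun j : Fin m => b (g j)) ∈ ρ} := by
    apply Set.sInter_subset_of_mem
    constructor
    · rintro b ⟨i, hi, hb⟩
      obtain ⟨j, hj, hg1, hg2⟩ := hpairs i hi
      apply hρnice
      refine ⟨j, hj, ?_⟩
      show b (g ⟨j, _⟩) = b (g ⟨j+1, hj⟩)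
      rw [hg1, hg2]
      exact hb
    · intro i γ hγ
      exact hρcl i (fun j' => fun t => γ j' (g t)) hγ
  intro hgen
  have ha : a ∈ 𝔸.gen (Drel A n) := by rw [hgen]; exact Set.mem_univ a
  have hmem := hsub ha
  have hfc : (fun j : Fin m => a (g j)) = c := funext hag
  have hmem' : (fun j : Fin m => a (g j)) ∈ ρ := hmem
  rw [hfc] at hmem'
  exact hc hmem'
end

section
/- Let 𝔸 be a finite algebra with |A| = k, and let σ be a nice relation in Inv(𝔸) of odd arity m with m ≥ 2k + 1. Then there exists a nice relation in Inv(𝔸) of arity m − 1 (obtained from σ by identifying two variables in odd positions). -/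
def collapseMap (m P Q : ℕ) (h1 : P < Q) (h2 : Q + 1 ≤ m) : Fin m → Fin (m - 1) :=
  fun j =>
    if hlt : (j : ℕ) < Q then ⟨Q - 1 - (j : ℕ), by omega⟩
    else if heq : (j : ℕ) = Q then ⟨Q - 1 - P, by omega⟩
    else ⟨m - 1 + Q - (j : ℕ), by have := j.isLt; omega⟩

lemma collapseMap_val (m P Q : ℕ) (h1 : P < Q) (h2 : Q + 1 ≤ m) (j : Fin m) :
    (collapseMap m P Q h1 h2 j : ℕ) =
      if (j : ℕ) < Q then Q - 1 - (j : ℕ)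
      else if (j : ℕ) = Q then Q - 1 - P
      else m - 1 + Q - (j : ℕ) := by
  unfold collapseMap
  split_ifs <;> rfl

def collapseSection (m P Q : ℕ) (h1 : P < Q) (h2 : Q + 1 ≤ m) : Fin (m - 1) → Fin m :=
  fun t =>
    if h : (t : ℕ) < Q then ⟨Q - 1 - (t : ℕ), by omega⟩
    else ⟨m - 1 + Q - (t : ℕ), by have := t.isLt; omega⟩

lemma collapseSection_val (m P Q : ℕ) (h1 : P < Q) (h2 : Q + 1 ≤ m) (t : Fin (m - 1)) :
    (collapseSection m P Q h1 h2 t : ℕ) =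
      if (t : ℕ) < Q then Q - 1 - (t : ℕ) else m - 1 + Q - (t : ℕ) := by
  unfold collapseSection
  split_ifs <;> rfl

theorem stmt9_aux {A : Type} (𝔸 : MyAlgebra A) (m : ℕ) (σ : Set (Fin m → A))
    (hσne : σ ≠ Set.univ)
    (hσnice : ∀ c : Fin m → A,
      (∃ i : ℕ, ∃ h : i + 1 < m, c ⟨i, by omega⟩ = c ⟨i + 1, h⟩) → c ∈ σ)
    (hinv : 𝔸.Closed σ)
    (P Q : ℕ) (hPQ : P < Q) (hQm : Q + 1 ≤ m)
    (hPe : P % 2 = 0) (hQe : Q % 2 = 0)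
    (b : Fin m → A) (hb : b ∉ σ)
    (hbPQ : b ⟨P, by omega⟩ = b ⟨Q, by omega⟩)
    (hcase : Q = m - 1 ∨
      ∀ b' : Fin m → A, b' ∉ σ → b' ⟨0, by omega⟩ ≠ b' ⟨m - 1, by omega⟩) :
    ∃ (σ' : Set (Fin (m - 1) → A)) (g : Fin m → Fin (m - 1)) (p q : Fin m),
      p ≠ q ∧ (p : ℕ) % 2 = 0 ∧ (q : ℕ) % 2 = 0 ∧ g p = g q ∧
      (∀ i j : Fin m, g i = g j → i = j ∨ (i = p ∧ j = q) ∨ (i = q ∧ j = p)) ∧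
      σ' = {c : Fin (m - 1) → A | c ∘ g ∈ σ} ∧
      Nice σ' ∧ 𝔸.Closed σ' := by
  obtain ⟨g, hgv⟩ : ∃ g : Fin m → Fin (m - 1), ∀ j : Fin m, (g j : ℕ) =
      if (j : ℕ) < Q then Q - 1 - (j : ℕ)
      else if (j : ℕ) = Q then Q - 1 - P
      else m - 1 + Q - (j : ℕ) :=
    ⟨collapseMap m P Q hPQ hQm, collapseMap_val m P Q hPQ hQm⟩
  obtain ⟨s, hsv⟩ : ∃ s : Fin (m - 1) → Fin m, ∀ t : Fin (m - 1), (s t : ℕ) =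
      if (t : ℕ) < Q then Q - 1 - (t : ℕ) else m - 1 + Q - (t : ℕ) :=
    ⟨collapseSection m P Q hPQ hQm, collapseSection_val m P Q hPQ hQm⟩
  have hsg : ∀ j : Fin m, (j : ℕ) ≠ Q → s (g j) = j := by
    intro j hj
    have hjlt := j.isLt
    apply Fin.ext
    rw [hsv, hgv]
    split_ifs <;> omega
  have hsgQ : ∀ (hQ' : Q < m), s (g ⟨Q, hQ'⟩) = ⟨P, by omega⟩ := by
    intro hQ'
    apply Fin.ext
    rw [hsv, hgv]
    simp only [Fin.val_mk]
    split_ifs <;> omega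
  refine ⟨{c | c ∘ g ∈ σ}, g, ⟨P, by omega⟩, ⟨Q, by omega⟩, ?_, ?_, ?_, ?_, ?_, rfl,
    ⟨?_, ?_⟩, ?_⟩
  · simp only [ne_eq, Fin.mk.injEq]; omega
  · exact hPe
  · exact hQe
  · apply Fin.ext
    rw [hgv, hgv]
    simp only [Fin.val_mk]
    split_ifs <;> omega
  · intro i j hij
    have hval : (g i : ℕ) = (g j : ℕ) := congrArg Fin.val hij
    rw [hgv, hgv] at hval
    have hi := i.isLt
    have hj := j.isLt
    simp only [Fin.ext_iff, Fin.val_mk]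
    split_ifs at hval <;> omega
  · -- σ' ≠ univ
    intro hu
    apply hb
    have hmem : (b ∘ s) ∈ {c : Fin (m - 1) → A | c ∘ g ∈ σ} := hu ▸ Set.mem_univ _
    have hcg : (b ∘ s) ∘ g = b := by
      funext j
      show b (s (g j)) = b j
      by_cases hj : (j : ℕ) = Q
      · have hj' : j = ⟨Q, by omega⟩ := Fin.ext hj
        rw [hj', hsgQ (by omega)]
        exact hbPQ
      · rw [hsg j hj]
    rw [Set.mem_setOf_eq, hcg] at hmem
    exact hmem
  · -- contains all tuples with two equal consecutive entries
    rintro c ⟨i, hi, hceq⟩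
    show c ∘ g ∈ σ
    have key : ∀ (x y : Fin m), (g x : ℕ) = i + 1 → (g y : ℕ) = i →
        c (g x) = c (g y) := by
      intro x y hx hy
      have ex : g x = ⟨i + 1, hi⟩ := Fin.ext hx
      have ey : g y = ⟨i, by omega⟩ := Fin.ext hy
      rw [ex, ey]
      exact hceq.symm
    rcases Nat.lt_trichotomy (i + 1) Q with h | h | h
    · refine hσnice _ ⟨Q - 2 - i, by omega, ?_⟩
      exact key ⟨Q - 2 - i, by omega⟩ ⟨Q - 2 - i + 1, by omega⟩
        (by rw [hgv]; simp only [Fin.val_mk]; split_ifs <;> omega)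
        (by rw [hgv]; simp only [Fin.val_mk]; split_ifs <;> omega)
    · -- i + 1 = Q : use the endpoint hypothesis
      have hQsm : Q < m - 1 := by omega
      have H2 : ∀ b' : Fin m → A, b' ∉ σ →
          b' ⟨0, by omega⟩ ≠ b' ⟨m - 1, by omega⟩ := by
        rcases hcase with h' | h'
        · omega
        · exact h'
      by_contra hns
      refine H2 (c ∘ g) hns ?_
      exact (key ⟨m - 1, by omega⟩ ⟨0, by omega⟩
        (by rw [hgv]; simp only [Fin.val_mk]; split_ifs <;> omega)
        (by rw [hgv]; simp only [Fin.val_mk]; split_ifs <;> omega)).symm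
    · refine hσnice _ ⟨m - 2 + Q - i, by omega, ?_⟩
      exact key ⟨m - 2 + Q - i, by omega⟩ ⟨m - 2 + Q - i + 1, by omega⟩
        (by rw [hgv]; simp only [Fin.val_mk]; split_ifs <;> omega)
        (by rw [hgv]; simp only [Fin.val_mk]; split_ifs <;> omega)
  · -- Closed
    intro op γ hγ
    exact hinv op (fun j => γ j ∘ g) hγ

/-- from a nice invariant relation of odd arity `m ≥ 2k + 1` one obtains a
nice invariant relation of arity `m - 1` by identifying two variables in odd positions
(0-indexed: two even positions `p ≠ q`). -/
theorem stmt_9 {A : Type} [Fintype A] (𝔸 : MyAlgebra A) (k m : ℕ)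
    (hk : Fintype.card A = k) (hodd : Odd m) (hm : 2 * k + 1 ≤ m)
    (σ : Set (Fin m → A)) (hσ : Nice σ) (hinv : 𝔸.Closed σ) :
    ∃ (σ' : Set (Fin (m - 1) → A)) (g : Fin m → Fin (m - 1)) (p q : Fin m),
      p ≠ q ∧ (p : ℕ) % 2 = 0 ∧ (q : ℕ) % 2 = 0 ∧ g p = g q ∧
      (∀ i j : Fin m, g i = g j → i = j ∨ (i = p ∧ j = q) ∨ (i = q ∧ j = p)) ∧
      σ' = {c : Fin (m - 1) → A | c ∘ g ∈ σ} ∧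
      Nice σ' ∧ 𝔸.Closed σ' := by
  obtain ⟨hne, hnice⟩ := hσ
  obtain ⟨b0, hb0⟩ := (Set.ne_univ_iff_exists_notMem σ).mp hne
  obtain ⟨r, hr⟩ := hodd
  have hm1 : 1 ≤ m := by omega
  have hA : Nonempty A := ⟨b0 ⟨0, by omega⟩⟩
  have hk1 : 1 ≤ k := by rw [← hk]; exact Fintype.card_pos
  by_cases hend : ∃ b' : Fin m → A, b' ∉ σ ∧ b' ⟨0, by omega⟩ = b' ⟨m - 1, by omega⟩
  · obtain ⟨b', hb', hbe⟩ := hend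
    exact stmt9_aux 𝔸 m σ hne hnice hinv 0 (m - 1) (by omega) (by omega)
      (by omega) (by omega) b' hb' hbe (Or.inl rfl)
  · push_neg at hend
    set f : Fin (k + 1) → A := fun t => b0 ⟨2 * (t : ℕ), by have := t.isLt; omega⟩ with hf
    have hcard : Fintype.card A < Fintype.card (Fin (k + 1)) := by simp [hk]
    obtain ⟨t1, t2, htne, htf⟩ := Fintype.exists_ne_map_eq_of_card_lt f hcard
    rcases Nat.lt_trichotomy (t1 : ℕ) (t2 : ℕ) with h | h | h
    · refine stmt9_aux 𝔸 m σ hne hnice hinv (2 * (t1 : ℕ)) (2 * (t2 : ℕ)) (by omega)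
        (by have := t2.isLt; omega) (by omega) (by omega) b0 hb0 htf (Or.inr hend)
    · exact absurd (Fin.ext h) htne
    · refine stmt9_aux 𝔸 m σ hne hnice hinv (2 * (t2 : ℕ)) (2 * (t1 : ℕ)) (by omega)
        (by have := t1.isLt; omega) (by omega) (by omega) b0 hb0 htf.symm (Or.inr hend)
end

section
/- Let 𝔸 be a finite algebra with |A| = k, let n be a positive integer, and suppose there exists a relation σ ∈ Inv(𝔸) of arity 2n + k such that σ ≠ A^{2n+k} and for all c_1,…,c_n, d_1,…,d_n, e_1,…,e_k ∈ A: if there exist i, j ∈ {1,…,n} with c_i = d_j, then (c_1,…,c_n, d_1,…,d_n, e_1,…,e_k) ∈ σ. Then every generating set of 𝔸^{2n+k} contains more than 2^{n−k} tuples. -/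
def swapMap (n k : ℕ) (S : Fin n → Bool) (p : Fin (2*n+k)) : Fin (2*n+k) :=
  if h : (p:ℕ) < n then
    (if S ⟨p, h⟩ then ⟨n + p, by omega⟩ else p)
  else if h2 : (p:ℕ) < 2*n then
    (if S ⟨(p:ℕ) - n, by omega⟩ then ⟨(p:ℕ) - n, by omega⟩ else p)
  else p

lemma swapMap_lo {n k : ℕ} (S : Fin n → Bool) (i : Fin n) (h : (i:ℕ) < 2*n+k) :
    swapMap n k S ⟨i, h⟩ = if S i then ⟨n + i, by omega⟩ else ⟨i, h⟩ := by
  unfold swapMap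
  rw [dif_pos (show ((⟨(i:ℕ), h⟩ : Fin (2*n+k)):ℕ) < n from i.isLt)]

lemma swapMap_hi {n k : ℕ} (S : Fin n → Bool) (i : Fin n) (h : n + (i:ℕ) < 2*n+k) :
    swapMap n k S ⟨n + i, h⟩ = if S i then ⟨i, by omega⟩ else ⟨n + i, h⟩ := by
  unfold swapMap
  have h1 : ¬ ((⟨n + (i:ℕ), h⟩ : Fin (2*n+k)):ℕ) < n := by simp
  have h2 : ((⟨n + (i:ℕ), h⟩ : Fin (2*n+k)):ℕ) < 2*n := by have := i.isLt; simp; omega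
  rw [dif_neg h1, dif_pos h2]
  have : (⟨((⟨n + (i:ℕ), h⟩ : Fin (2*n+k)):ℕ) - n, by omega⟩ : Fin n) = i := by
    apply Fin.ext; simp
  rw [this]
  split <;> apply Fin.ext <;> simp

lemma swapMap_invol {n k : ℕ} (S : Fin n → Bool) (p : Fin (2*n+k)) :
    swapMap n k S (swapMap n k S p) = p := by
  rcases p with ⟨v, hv⟩
  by_cases h : v < n
  · have : (⟨v, hv⟩ : Fin (2*n+k)) = ⟨((⟨v,h⟩ : Fin n):ℕ), hv⟩ := rfl
    rw [this, swapMap_lo]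
    by_cases hS : S ⟨v, h⟩
    · rw [if_pos hS, swapMap_hi, if_pos hS]
    · rw [if_neg hS, swapMap_lo, if_neg hS]
  · by_cases h2 : v < 2*n
    · have hvn : v - n < n := by omega
      have : (⟨v, hv⟩ : Fin (2*n+k)) = ⟨n + ((⟨v - n, hvn⟩ : Fin n):ℕ), by simp; omega⟩ := by
        apply Fin.ext; simp; omega
      rw [this, swapMap_hi]
      by_cases hS : S ⟨v - n, hvn⟩
      · rw [if_pos hS, swapMap_lo, if_pos hS]
      · rw [if_neg hS, swapMap_hi, if_neg hS]
    · have e : swapMap n k S ⟨v, hv⟩ = ⟨v, hv⟩ := by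
        unfold swapMap
        rw [dif_neg (by simpa using h), dif_neg (by simpa using h2)]
      rw [e, e]

lemma gen_subset {A : Type} (𝔸 : MyAlgebra A) {m : ℕ} {X S : Set (Fin m → A)}
    (h1 : X ⊆ S) (h2 : 𝔸.Closed S) : 𝔸.gen X ⊆ S :=
  Set.sInter_subset_of_mem ⟨h1, h2⟩

lemma closed_comp {A : Type} (𝔸 : MyAlgebra A) {m : ℕ} {σ : Set (Fin m → A)}
    (h : 𝔸.Closed σ) (π : Fin m → Fin m) : 𝔸.Closed {t | t ∘ π ∈ σ} := by
  intro i γ hγ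
  exact h i (fun j => γ j ∘ π) hγ

/-- if there is a non-full invariant relation `σ` of arity `2n + k`
containing all tuples whose first block and second block share a common value,
then every generating set of `𝔸^{2n+k}` has more than `2^{n-k}` tuples. -/
theorem stmt_10 {A : Type} [Fintype A] (𝔸 : MyAlgebra A) (k : ℕ)
    (hk : Fintype.card A = k) (n : ℕ) (hn : 0 < n)
    (σ : Set (Fin (2 * n + k) → A)) (hinv : 𝔸.Closed σ) (hfull : σ ≠ Set.univ)
    (hcond : ∀ t : Fin (2 * n + k) → A,
      (∃ i j : Fin n, t ⟨(i : ℕ), by have := i.isLt; omega⟩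
                    = t ⟨n + (j : ℕ), by have := j.isLt; omega⟩) → t ∈ σ) :
    ∀ X : Finset (Fin (2 * n + k) → A),
      𝔸.gen (X : Set (Fin (2 * n + k) → A)) = Set.univ →
      (2 : ℝ) ^ ((n : ℤ) - (k : ℤ)) < (X.card : ℝ) := by
  intro X hX
  classical
  rcases Nat.lt_or_ge k 2 with hk2 | hk2
  · exfalso
    apply hfull
    interval_cases k
    · have hA : IsEmpty A := Fintype.card_eq_zero_iff.mp hk
      exact Set.eq_univ_of_forall fun t => (hA.false (t ⟨0, by omega⟩)).elim
    · have hA : Subsingleton A := Fintype.card_le_one_iff_subsingleton.mp (by omega)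
      exact Set.eq_univ_of_forall fun t =>
        hcond t ⟨⟨0, hn⟩, ⟨0, hn⟩, Subsingleton.elim _ _⟩
  -- main case : k ≥ 2
  obtain ⟨u, hu⟩ : ∃ u, u ∉ σ := by
    by_contra h; push_neg at h; exact hfull (Set.eq_univ_of_forall h)
  have key : ∀ S : Fin n → Bool, ∃ x, x ∈ X ∧ (x ∘ swapMap n k S) ∉ σ := by
    intro S
    by_contra h
    push_neg at h
    have hclosed := closed_comp 𝔸 hinv (swapMap n k S)
    have hsub : (X : Set (Fin (2*n+k) → A)) ⊆ {t | t ∘ swapMap n k S ∈ σ} :=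
      fun x hx => h x hx
    have hgen := gen_subset 𝔸 hsub hclosed
    rw [hX] at hgen
    have hu2 : (u ∘ swapMap n k S) ∘ swapMap n k S ∈ σ := hgen (Set.mem_univ _)
    have : (u ∘ swapMap n k S) ∘ swapMap n k S = u := by
      funext p; simp [Function.comp, swapMap_invol]
    rw [this] at hu2
    exact hu hu2
  choose x hxX hxσ using key
  set y : (Fin n → Bool) → Fin (2*n+k) → A := fun S => x S ∘ swapMap n k S with hy
  have hdisj : ∀ (S : Fin n → Bool) (i j : Fin n),
      y S ⟨(i:ℕ), by have := i.isLt; omega⟩ ≠ y S ⟨n + (j:ℕ), by have := j.isLt; omega⟩ :=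
    fun S i j h => hxσ S (hcond _ ⟨i, j, h⟩)
  set Cset : (Fin n → Bool) → Finset A := fun S =>
    Finset.image (fun i : Fin n => y S ⟨(i:ℕ), by have := i.isLt; omega⟩) Finset.univ with hC
  -- values of y in terms of x
  have hylo : ∀ (S : Fin n → Bool) (i : Fin n), S i = true →
      y S ⟨(i:ℕ), by have := i.isLt; omega⟩ = x S ⟨n + (i:ℕ), by have := i.isLt; omega⟩ := by
    intro S i hSi
    show x S (swapMap n k S ⟨(i:ℕ), _⟩) = _
    rw [swapMap_lo S i, if_pos hSi]
  have hyhi : ∀ (S : Fin n → Bool) (i : Fin n), S i = false →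
      y S ⟨n + (i:ℕ), by have := i.isLt; omega⟩ = x S ⟨n + (i:ℕ), by have := i.isLt; omega⟩ := by
    intro S i hSi
    show x S (swapMap n k S ⟨n + (i:ℕ), _⟩) = _
    rw [swapMap_hi S i, if_neg (by simp [hSi])]
  have f1 : ∀ (S : Fin n → Bool) (i : Fin n), S i = true →
      x S ⟨n + (i:ℕ), by have := i.isLt; omega⟩ ∈ Cset S := by
    intro S i hSi
    rw [hC]
    exact Finset.mem_image.mpr ⟨i, Finset.mem_univ i, hylo S i hSi⟩
  have f2 : ∀ (S : Fin n → Bool) (i : Fin n), S i = false →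
      x S ⟨n + (i:ℕ), by have := i.isLt; omega⟩ ∉ Cset S := by
    intro S i hSi hmem
    rw [hC] at hmem
    obtain ⟨j, _, hj⟩ := Finset.mem_image.mp hmem
    rw [← hyhi S i hSi] at hj
    exact hdisj S j i hj
  have f3 : ∀ S : Fin n → Bool, (Cset S).Nonempty := by
    intro S
    exact ⟨_, Finset.mem_image.mpr ⟨⟨0, hn⟩, Finset.mem_univ _, rfl⟩⟩
  have f4 : ∀ S : Fin n → Bool, Cset S ≠ Finset.univ := by
    intro S hEq
    have hmem : y S ⟨n + ((⟨0, hn⟩ : Fin n):ℕ), by omega⟩ ∈ Cset S := by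
      rw [hEq]; exact Finset.mem_univ _
    rw [hC] at hmem
    obtain ⟨j, _, hj⟩ := Finset.mem_image.mp hmem
    exact hdisj S j ⟨0, hn⟩ hj
  -- the injection
  set P : Finset (Finset A) :=
    (Finset.univ.erase ∅).erase Finset.univ with hP
  have hAne : (Finset.univ : Finset A).Nonempty := by
    rw [← Finset.card_pos, Finset.card_univ, hk]; omega
  have hPmem : ∀ S : Fin n → Bool, Cset S ∈ P := by
    intro S
    rw [hP]
    refine Finset.mem_erase.mpr ⟨f4 S, Finset.mem_erase.mpr ⟨?_, Finset.mem_univ _⟩⟩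
    exact (f3 S).ne_empty
  have hinj : Set.InjOn (fun S : Fin n → Bool => (x S, Cset S))
      (Finset.univ : Finset (Fin n → Bool)) := by
    intro S1 _ S2 _ h
    have h1 : x S1 = x S2 := congrArg Prod.fst h
    have h2 : Cset S1 = Cset S2 := congrArg Prod.snd h
    funext i
    by_cases hS1 : S1 i = true <;> by_cases hS2 : S2 i = true
    · rw [hS1, hS2]
    · exfalso
      have := f1 S1 i hS1
      rw [h1, h2] at this
      exact f2 S2 i (Bool.not_eq_true _ ▸ hS2) this
    · exfalso
      have := f1 S2 i hS2
      rw [← h1, ← h2] at this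
      exact f2 S1 i (Bool.not_eq_true _ ▸ hS1) this
    · rw [Bool.not_eq_true] at hS1 hS2; rw [hS1, hS2]
  have hmaps : ∀ S ∈ (Finset.univ : Finset (Fin n → Bool)),
      (x S, Cset S) ∈ X ×ˢ P :=
    fun S _ => Finset.mem_product.mpr ⟨hxX S, hPmem S⟩
  have hcard := Finset.card_le_card_of_injOn _ hmaps hinj
  rw [Finset.card_univ, Finset.card_product] at hcard
  have hcardBool : Fintype.card (Fin n → Bool) = 2^n := by
    simp [Fintype.card_fun]
  rw [hcardBool] at hcard
  have hPcard : P.card + 2 = 2^k := by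
    have h1 : (∅ : Finset A) ∈ (Finset.univ : Finset (Finset A)) := Finset.mem_univ _
    have h2 : (Finset.univ : Finset A) ∈ Finset.univ.erase (∅ : Finset A) :=
      Finset.mem_erase.mpr ⟨hAne.ne_empty.symm ∘ Eq.symm, Finset.mem_univ _⟩
    have e1 : (Finset.univ.erase (∅ : Finset A)).card = 2^k - 1 := by
      rw [Finset.card_erase_of_mem h1, Finset.card_univ, Fintype.card_finset, hk]
    have e2 : P.card = 2^k - 1 - 1 := by
      rw [hP, Finset.card_erase_of_mem h2, e1]
    have hpos : 4 ≤ 2^k := by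
      calc (4:ℕ) = 2^2 := rfl
      _ ≤ 2^k := Nat.pow_le_pow_right (by norm_num) hk2
    omega
  have hXpos : 0 < X.card := by
    rcases Nat.eq_zero_or_pos X.card with h0 | h0
    · rw [h0, zero_mul] at hcard
      have := Nat.one_le_two_pow (n := n)
      omega
    · exact h0
  have hlt : (2:ℕ)^n < X.card * 2^k := by
    calc (2:ℕ)^n ≤ X.card * P.card := hcard
      _ < X.card * (P.card + 2) := by
          exact mul_lt_mul_of_pos_left (by omega) hXpos
      _ = X.card * 2^k := by rw [hPcard]
  have h2k : (0:ℝ) < 2^k := by positivity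
  rw [zpow_sub₀ (two_ne_zero), zpow_natCast, zpow_natCast, div_lt_iff₀ h2k]
  exact_mod_cast hlt
end

section
/- Let A be a finite set with |A| = k, let n be a positive integer, and let (a_1,…,a_{2n}) ∈ A^{2n}. Then the number of permutations π of {1,…,2n} with the property that for all i, j ∈ {1,…,2n}: a_i = a_j implies that π(i) and π(j) are either both in {1,…,n} or both in {n+1,…,2n}, is at most n!·n!·2^k. -/
theorem Fintype.card_equiv_le_factorial (α β : Type*) [Fintype α] [Fintype β]
    [DecidableEq α] [DecidableEq β] :
    Fintype.card (α ≃ β) ≤ (Fintype.card β).factorial := by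
  cases isEmpty_or_nonempty (α ≃ β) with
  | inl _ => simp
  | inr h =>
    obtain ⟨e⟩ := h
    rw [Fintype.card_equiv e, Fintype.card_congr e]

theorem Equiv.ncard_setOf_forall_apply_iff_le {α β : Type*} [Fintype α] [Fintype β]
    [DecidableEq α] [DecidableEq β] (p : α → Prop) (q : β → Prop)
    [DecidablePred p] [DecidablePred q] :
    {e : α ≃ β | ∀ x, q (e x) ↔ p x}.ncard ≤
      (Fintype.card {y // q y}).factorial * (Fintype.card {y // ¬ q y}).factorial := by
  let restrict : {e : α ≃ β | ∀ x, q (e x) ↔ p x} →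
      ({x // p x} ≃ {y // q y}) × ({x // ¬ p x} ≃ {y // ¬ q y}) := fun e =>
    (e.1.subtypeEquiv fun x => (e.2 x).symm, e.1.subtypeEquiv fun x => not_congr (e.2 x).symm)
  have restrict_injective : Function.Injective restrict := by
    intro e e' h
    ext x
    by_cases hx : p x
    · exact congrArg Subtype.val (Equiv.congr_fun (congrArg Prod.fst h) ⟨x, hx⟩)
    · exact congrArg Subtype.val (Equiv.congr_fun (congrArg Prod.snd h) ⟨x, hx⟩)
  calc {e : α ≃ β | ∀ x, q (e x) ↔ p x}.ncard
      ≤ Nat.card (({x // p x} ≃ {y // q y}) × ({x // ¬ p x} ≃ {y // ¬ q y})) :=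
        Nat.card_le_card_of_injective restrict restrict_injective
    _ ≤ _ := by
        rw [Nat.card_eq_fintype_card, Fintype.card_prod]
        exact Nat.mul_le_mul (Fintype.card_equiv_le_factorial _ _)
          (Fintype.card_equiv_le_factorial _ _)

theorem exists_bool_forall_iff_comp_of_forall_eq {ι A : Type*} (a : ι → A) (P : ι → Prop)
    (hP : ∀ i j, a i = a j → P i → P j) : ∃ f : A → Bool, ∀ i, P i ↔ f (a i) := by
  classical
  refine ⟨fun x => decide (∃ i, a i = x ∧ P i), fun i => ?_⟩
  simp only [decide_eq_true_eq]
  exact ⟨fun h => ⟨i, rfl, h⟩, fun ⟨j, hj, h⟩ => hP j i hj h⟩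

theorem Fin.card_subtype_val_lt_two_mul (n : ℕ) :
    Fintype.card {y : Fin (2 * n) // (y : ℕ) < n} = n := by
  rw [Fintype.card_subtype, Fin.card_filter_val_lt]
  omega

theorem Fin.card_subtype_not_val_lt_two_mul (n : ℕ) :
    Fintype.card {y : Fin (2 * n) // ¬ (y : ℕ) < n} = n := by
  rw [Fintype.card_subtype_compl, Fin.card_subtype_val_lt_two_mul, Fintype.card_fin]
  omega

theorem stmt_11_general {A : Type} [Fintype A] (k : ℕ) (hk : Fintype.card A = k)
    (n : ℕ) (a : Fin (2 * n) → A) :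
    Set.ncard {π : Equiv.Perm (Fin (2 * n)) | ∀ i j : Fin (2 * n), a i = a j →
        (((π i : ℕ) < n ∧ (π j : ℕ) < n) ∨ (n ≤ (π i : ℕ) ∧ n ≤ (π j : ℕ)))}
      ≤ n.factorial * n.factorial * 2 ^ k := by
  classical
  let fiber (f : A → Bool) : Set (Equiv.Perm (Fin (2 * n))) :=
    {π | ∀ i, (π i : ℕ) < n ↔ f (a i)}
  have fiber_le (f : A → Bool) : (fiber f).ncard ≤ n.factorial * n.factorial := by
    have := Equiv.ncard_setOf_forall_apply_iff_le (fun i => f (a i) = true)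
      (fun y : Fin (2 * n) => (y : ℕ) < n)
    rwa [Fin.card_subtype_val_lt_two_mul, Fin.card_subtype_not_val_lt_two_mul] at this
  calc _ ≤ (⋃ f, fiber f).ncard := by
        refine Set.ncard_le_ncard fun π hπ => ?_
        obtain ⟨f, hf⟩ := exists_bool_forall_iff_comp_of_forall_eq a (fun i => (π i : ℕ) < n)
          fun i j hij hi => by rcases hπ i j hij with h | h <;> omega
        exact Set.mem_iUnion.mpr ⟨f, hf⟩
    _ ≤ ∑ f, (fiber f).ncard := Set.ncard_iUnion_le_of_fintype fiber
    _ ≤ Fintype.card (A → Bool) • (n.factorial * n.factorial) :=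
        Finset.sum_le_card_nsmul _ _ _ fun f _ => fiber_le f
    _ = n.factorial * n.factorial * 2 ^ k := by
        rw [Fintype.card_fun, Fintype.card_bool, hk, smul_eq_mul, mul_comm]

/-- the number of permutations `π` of `{1,…,2n}` such that equal entries of
`a` are sent to the same half `{1,…,n}` or `{n+1,…,2n}` is at most `n! ⬝ n! ⬝ 2^k`. -/
theorem stmt_11 {A : Type} [Fintype A] (k : ℕ) (hk : Fintype.card A = k)
    (n : ℕ) (hn : 0 < n) (a : Fin (2 * n) → A) :
    Set.ncard {π : Equiv.Perm (Fin (2 * n)) | ∀ i j : Fin (2 * n), a i = a j →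
        (((π i : ℕ) < n ∧ (π j : ℕ) < n) ∨ (n ≤ (π i : ℕ) ∧ n ≤ (π j : ℕ)))}
      ≤ n.factorial * n.factorial * 2 ^ k :=
  stmt_11_general k hk n a
end

section
/- Let 𝔸 be a finite idempotent algebra satisfying the EGP property. Then there exist α, β ⊊ A with α ∪ β = A such that, setting ρ = (α × α) ∪ (β × β), for every n the relation σ_n ⊆ A^{2n} defined by σ_n(x_1,…,x_{2n}) ⇔ ρ(x_1,x_2) ∨ ρ(x_3,x_4) ∨ … ∨ ρ(x_{2n−1},x_{2n}) is invariant for 𝔸. -/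
/-! Let `Ω_ι ⊆ A^(ι × 2)` be the subpower generated by the tuples of pairs having some pair on the
diagonal, and call `P ⊆ A²` free if no tuple of pairs from `P` lies in any `Ω_ι`.

If tuples with two equal adjacent entries generated `A^n` for all large `n`, then every power
would be generated by the tuples made of boundedly many constant blocks, of which there are
polynomially many. So EGP provides arbitrarily large `n` at which they do not, and then, by
pigeonhole, a free pair. A maximal free set `P` is irreflexive and symmetric, and for every
operation `f` some coordinate `j` satisfies `(u j, w j) ∉ P → (f u, f w) ∉ P`. Given `(a, b) ∈ P`,
the sets `α = {z | (z, b) ∉ P}` and `β = {z | ∃ c, (c, b) ∈ P ∧ (z, c) ∉ P}` are then preserved by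
each `f` through such a coordinate, which makes every `σ_n` invariant. -/

open Finset in
theorem Monotone.lt_card_filter_le_iff {β : Type} [Preorder β] {n : ℕ}
    {φ : Fin n → β} (hφ : Monotone φ) (i : Fin n) (b : β) [DecidablePred (φ · ≤ b)] :
    i.val < #{j | φ j ≤ b} ↔ φ i ≤ b := by
  constructor
  · intro hi
    by_contra hib
    have hsub : ({j | φ j ≤ b} : Finset (Fin n)) ⊆ Iio i := by
      intro j hj
      rw [mem_filter] at hj
      rw [mem_Iio]
      by_contra hij
      exact hib ((hφ (not_lt.mp hij)).trans hj.2)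
    have := card_le_card hsub
    rw [Fin.card_Iio] at this
    omega
  · intro hib
    have hsub : Iic i ⊆ ({j | φ j ≤ b} : Finset (Fin n)) := by
      intro j hj
      rw [mem_Iic] at hj
      exact mem_filter.mpr ⟨mem_univ j, (hφ hj).trans hib⟩
    have := card_le_card hsub
    rw [Fin.card_Iic] at this
    omega

open Finset Classical in
theorem card_monotone_le (n M : ℕ) : #{φ : Fin n → Fin M | Monotone φ} ≤ (n + 1) ^ M := by
  let threshold (φ : Fin n → Fin M) (b : Fin M) : Fin (n + 1) :=
    ⟨#{j | φ j ≤ b}, Nat.lt_succ_of_le ((card_filter_le _ _).trans (by simp))⟩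
  have hinj : Set.InjOn threshold {φ | Monotone φ} := by
    intro φ hφ ψ hψ h
    have hiff : ∀ i b, φ i ≤ b ↔ ψ i ≤ b := fun i b => by
      rw [← hφ.lt_card_filter_le_iff, ← hψ.lt_card_filter_le_iff]
      exact iff_of_eq (congrArg (i.val < ·.val) (congrFun h b))
    exact funext fun i => le_antisymm ((hiff i (ψ i)).mpr le_rfl) ((hiff i (φ i)).mp le_rfl)
  calc #{φ : Fin n → Fin M | Monotone φ}
      ≤ #(univ : Finset (Fin M → Fin (n + 1))) :=
        card_le_card_of_injOn threshold (fun _ _ => mem_coe.mpr (mem_univ _))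
          (fun φ hφ ψ hψ => hinj (mem_filter.mp hφ).2 (mem_filter.mp hψ).2)
    _ = (n + 1) ^ M := by simp

namespace MyAlgebra

open Finset Function

variable {A : Type} {𝔸 : MyAlgebra A} {I J ι κ : Type} {P : Set (A × A)}

def IsSubpower (𝔸 : MyAlgebra A) (S : Set (I → A)) : Prop :=
  ∀ i : 𝔸.ι, ∀ γ : Fin (𝔸.arity i) → (I → A),
    (∀ j, γ j ∈ S) → (fun t => 𝔸.op i (fun j => γ j t)) ∈ S

def closure (𝔸 : MyAlgebra A) (X : Set (I → A)) : Set (I → A) :=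
  ⋂₀ {S | X ⊆ S ∧ 𝔸.IsSubpower S}

theorem gen_eq_closure {n : ℕ} (X : Set (Fin n → A)) : 𝔸.gen X = 𝔸.closure X := rfl

theorem subset_closure {X : Set (I → A)} : X ⊆ 𝔸.closure X :=
  fun _ hx _ hS => hS.1 hx

theorem isSubpower_closure {X : Set (I → A)} : 𝔸.IsSubpower (𝔸.closure X) :=
  fun i γ hγ _ hS => hS.2 i γ fun j => hγ j _ hS

theorem closure_minimal {X S : Set (I → A)} (hXS : X ⊆ S) (hS : 𝔸.IsSubpower S) :
    𝔸.closure X ⊆ S :=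
  fun _ hx => hx S ⟨hXS, hS⟩

theorem comp_mem_closure (g : J → I) {X : Set (I → A)} {Y : Set (J → A)}
    (hXY : ∀ y ∈ X, y ∘ g ∈ 𝔸.closure Y) {x : I → A} (hx : x ∈ 𝔸.closure X) :
    x ∘ g ∈ 𝔸.closure Y :=
  closure_minimal (S := (· ∘ g) ⁻¹' 𝔸.closure Y) hXY
    (fun i γ hγ => isSubpower_closure i (fun j => γ j ∘ g) hγ) hx

/-- The minor of `x` along `e`, with constants in the coordinates that `e` sends to `A`. -/
def substitute (e : J → I ⊕ A) (x : I → A) : J → A :=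
  fun j => (e j).elim x id

theorem substitute_op (hid : 𝔸.Idempotent) (e : J → I ⊕ A) (i : 𝔸.ι)
    (γ : Fin (𝔸.arity i) → I → A) :
    substitute e (fun t => 𝔸.op i (fun j => γ j t)) =
      fun t => 𝔸.op i (fun j => substitute e (γ j) t) := by
  funext t
  unfold substitute
  rcases e t with _ | a
  · rfl
  · exact (hid i a).symm

theorem IsSubpower.preimage_substitute (hid : 𝔸.Idempotent) (e : J → I ⊕ A)
    {S : Set (J → A)} (hS : 𝔸.IsSubpower S) : 𝔸.IsSubpower (substitute e ⁻¹' S) := by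
  intro i γ hγ
  rw [Set.mem_preimage, substitute_op hid]
  exact hS i _ hγ

theorem substitute_mem_closure (hid : 𝔸.Idempotent) (e : J → I ⊕ A) {X : Set (I → A)}
    {Y : Set (J → A)} (hXY : ∀ y ∈ X, substitute e y ∈ 𝔸.closure Y) {x : I → A}
    (hx : x ∈ 𝔸.closure X) : substitute e x ∈ 𝔸.closure Y :=
  closure_minimal hXY (isSubpower_closure.preimage_substitute hid e) hx

open Classical in
/-- The `n`-tuples made of at most `M` constant blocks. -/
noncomputable def blockTuples (A : Type) [Fintype A] (M n : ℕ) : Finset (Fin n → A) :=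
  (univ ×ˢ ({φ | Monotone φ} : Finset (Fin n → Fin M))).image fun p => p.1 ∘ p.2

theorem mem_blockTuples [Fintype A] {M n : ℕ} {x : Fin n → A} :
    x ∈ blockTuples A M n ↔ ∃ (z : Fin M → A) (φ : Fin n → Fin M), Monotone φ ∧ z ∘ φ = x := by
  simp [blockTuples]

theorem card_blockTuples_le [Fintype A] (M n : ℕ) :
    #(blockTuples A M n) ≤ Fintype.card A ^ M * (n + 1) ^ M := by
  classical
  calc #(blockTuples A M n)
      ≤ #((univ : Finset (Fin M → A)) ×ˢ ({φ | Monotone φ} : Finset (Fin n → Fin M))) :=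
        card_image_le
    _ ≤ Fintype.card A ^ M * (n + 1) ^ M := by
        rw [card_product, card_univ, Fintype.card_fun, Fintype.card_fin]
        exact Nat.mul_le_mul_left _ (card_monotone_le n M)

theorem comp_mem_blockTuples [Fintype A] {M n n' : ℕ} {x : Fin n → A}
    (hx : x ∈ blockTuples A M n) {δ : Fin n' → Fin n} (hδ : Monotone δ) :
    x ∘ δ ∈ blockTuples A M n' := by
  obtain ⟨z, φ, hφ, rfl⟩ := mem_blockTuples.mp hx
  exact mem_blockTuples.mpr ⟨z, φ ∘ δ, hφ.comp hδ, rfl⟩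

theorem mem_blockTuples_of_le [Fintype A] [Nonempty A] {M n : ℕ} (h : n ≤ M) (x : Fin n → A) :
    x ∈ blockTuples A M n := by
  refine mem_blockTuples.mpr ⟨extend (Fin.castLE h) x fun _ => Classical.arbitrary A,
    Fin.castLE h, fun _ _ hij => hij, ?_⟩
  funext i
  exact (Fin.castLE_injective h).extend_apply _ _ i

def adjacentEq (A : Type) (n : ℕ) : Set (Fin (n + 1) → A) :=
  {x | ∃ p : Fin n, x p.castSucc = x p.succ}

theorem eq_comp_predAbove {n : ℕ} {x : Fin (n + 1) → A} {p : Fin n}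
    (hp : x p.castSucc = x p.succ) : x = (x ∘ p.castSucc.succAbove) ∘ p.predAbove := by
  funext i
  by_cases hi : i = p.castSucc
  · subst hi
    simp [hp]
  · simp [Fin.succAbove_predAbove hi]

theorem closure_blockTuples_eq_univ [Fintype A] [Nonempty A] {M : ℕ}
    (hM : ∀ n, M ≤ n → 𝔸.closure (adjacentEq A n) = Set.univ) (n : ℕ) :
    𝔸.closure (blockTuples A (M + 1) n : Set (Fin n → A)) = Set.univ := by
  induction n with
  | zero =>
    exact Set.eq_univ_of_forall fun x => subset_closure (mem_blockTuples_of_le (by omega) x)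
  | succ n ih =>
    refine Set.eq_univ_of_forall fun x => ?_
    by_cases hn : n + 1 ≤ M + 1
    · exact subset_closure (mem_blockTuples_of_le hn x)
    have hx : x ∈ 𝔸.closure (adjacentEq A n) := by rw [hM n (by omega)]; trivial
    refine closure_minimal (fun y hy => ?_) isSubpower_closure hx
    obtain ⟨p, hp⟩ := hy
    rw [eq_comp_predAbove hp]
    refine comp_mem_closure p.predAbove (fun y' hy' => ?_)
      (ih ▸ Set.mem_univ (x := y ∘ p.castSucc.succAbove))
    exact subset_closure (comp_mem_blockTuples hy' (Fin.predAbove_right_monotone p))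

open Filter Asymptotics in
theorem EGP.exists_lt_card_of_gen_eq_univ (hEGP : 𝔸.EGP) (c d : ℕ) :
    ∃ n, ∀ X : Finset (Fin n → A), 𝔸.gen (X : Set (Fin n → A)) = Set.univ →
      c * (n + 1) ^ d < #X := by
  obtain ⟨b, C, hb, hC, hgen⟩ := hEGP
  have hpoly : (fun n : ℕ => (c : ℝ) * ((n : ℝ) + 1) ^ d) =o[atTop] fun n => b ^ n := by
    have h := (isLittleO_pow_const_const_pow_of_one_lt (R := ℝ) d hb).comp_tendsto
      (tendsto_add_atTop_nat 1)
    have hshift : (fun n : ℕ => b ^ (n + 1)) =O[atTop] fun n => b ^ n := by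
      simpa only [pow_succ, mul_comm] using isBigO_const_mul_self b (fun n : ℕ => b ^ n) atTop
    simpa only [Function.comp_def, Nat.cast_add, Nat.cast_one] using
      (h.trans_isBigO hshift).const_mul_left (c : ℝ)
  obtain ⟨n, hn⟩ := (hpoly.bound (half_pos hC)).exists
  refine ⟨n, fun X hX => ?_⟩
  have hbn : 0 < b ^ n := pow_pos (by linarith) n
  rw [Real.norm_of_nonneg (by positivity), Real.norm_of_nonneg hbn.le] at hn
  exact_mod_cast hn.trans_lt ((by nlinarith : C / 2 * b ^ n < C * b ^ n).trans_le (hgen n X hX))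

theorem EGP.nonempty [Fintype A] (hEGP : 𝔸.EGP) : Nonempty A := by
  by_contra hA
  obtain ⟨n, hn⟩ := hEGP.exists_lt_card_of_gen_eq_univ 1 0
  have hgen : 𝔸.gen ((univ : Finset (Fin n → A)) : Set (Fin n → A)) = Set.univ := by
    rw [gen_eq_closure, coe_univ]
    exact Set.eq_univ_of_forall fun _ => subset_closure trivial
  have hcard := hn univ hgen
  rw [card_univ, Fintype.card_fun, Fintype.card_eq_zero_iff.mpr (not_nonempty_iff.mp hA),
    pow_zero, mul_one] at hcard
  exact hcard.not_ge (pow_le_one₀ le_rfl zero_le_one)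

theorem exists_closure_adjacentEq_ne_univ [Fintype A] (hEGP : 𝔸.EGP) (M : ℕ) :
    ∃ n, M ≤ n ∧ 𝔸.closure (adjacentEq A n) ≠ Set.univ := by
  have := hEGP.nonempty
  by_contra! hM
  obtain ⟨n, hn⟩ := hEGP.exists_lt_card_of_gen_eq_univ (Fintype.card A ^ (M + 1)) (M + 1)
  have hgen := (gen_eq_closure _).trans (closure_blockTuples_eq_univ hM n)
  exact (hn _ hgen).not_ge (card_blockTuples_le (M + 1) n)

/-- A tuple indexed by `ι × Fin 2` is read as the `ι`-indexed tuple of its pairs. -/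
def pairAt (x : ι × Fin 2 → A) (i : ι) : A × A := (x (i, 0), x (i, 1))

theorem apply_eq_of_pairAt_eq {x : ι × Fin 2 → A} {y : κ × Fin 2 → A} {i : ι} {k : κ}
    (h : pairAt y k = pairAt x i) (b : Fin 2) : y (k, b) = x (i, b) := by
  fin_cases b
  exacts [congrArg Prod.fst h, congrArg Prod.snd h]

def meetsDiag (A ι : Type) : Set (ι × Fin 2 → A) := {x | ∃ i, x (i, 0) = x (i, 1)}

/-- `Ω_ι`. -/
def diagClosure (𝔸 : MyAlgebra A) (ι : Type) : Set (ι × Fin 2 → A) :=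
  𝔸.closure (meetsDiag A ι)

theorem mem_diagClosure_of_injective (hid : 𝔸.Idempotent) {g : ι → κ} (hg : Injective g)
    {x : ι × Fin 2 → A} (hx : x ∈ 𝔸.diagClosure ι) {y : κ × Fin 2 → A}
    (hxy : ∀ i, pairAt y (g i) = pairAt x i) : y ∈ 𝔸.diagClosure κ := by
  let G : ι × Fin 2 → κ × Fin 2 := Prod.map g id
  have hG : Injective G := hg.prodMap injective_id
  let e : κ × Fin 2 → (ι × Fin 2) ⊕ A := extend G Sum.inl (Sum.inr ∘ y)
  have he : ∀ ib, e (G ib) = Sum.inl ib := hG.extend_apply _ _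
  have hy : substitute e x = y := by
    funext kb
    by_cases hkb : ∃ ib, G ib = kb
    · obtain ⟨⟨i, b⟩, rfl⟩ := hkb
      simp only [substitute, he]
      exact (apply_eq_of_pairAt_eq (hxy i) b).symm
    · simp [substitute, e, extend_apply' _ _ _ hkb]
  rw [← hy]
  refine substitute_mem_closure hid e (fun z hz => ?_) hx
  obtain ⟨i, hi⟩ := hz
  refine subset_closure ⟨g i, ?_⟩
  simp only [substitute]
  rw [show ((g i, 0) : κ × Fin 2) = G (i, 0) from rfl,
    show ((g i, 1) : κ × Fin 2) = G (i, 1) from rfl, he, he]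
  exact hi

def IsFree (𝔸 : MyAlgebra A) (P : Set (A × A)) : Prop :=
  ∀ (ι : Type) [Finite ι] (x : ι × Fin 2 → A), (∀ i, pairAt x i ∈ P) → x ∉ 𝔸.diagClosure ι

theorem IsFree.mk_self_notMem (hP : 𝔸.IsFree P) (d : A) : (d, d) ∉ P :=
  fun hd => hP Unit (fun _ => d) (fun _ => hd) (subset_closure ⟨(), rfl⟩)

theorem IsFree.union_preimage_swap (hP : 𝔸.IsFree P) : 𝔸.IsFree (P ∪ Prod.swap ⁻¹' P) := by
  classical
  intro ι _ x hx hmem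
  let flip : ι × Fin 2 → ι × Fin 2 := fun ib =>
    (ib.1, if pairAt x ib.1 ∈ P then ib.2 else ib.2.rev)
  refine hP ι (x ∘ flip) (fun i => ?_) (comp_mem_closure flip (fun z hz => ?_) hmem)
  · by_cases hi : pairAt x i ∈ P
    · rw [pairAt]
      simp only [Function.comp_apply, flip, if_pos hi]
      exact hi
    · rw [pairAt]
      simp only [Function.comp_apply, flip, if_neg hi]
      exact (hx i).resolve_left hi
  · obtain ⟨i, hi⟩ := hz
    refine subset_closure ⟨i, ?_⟩
    by_cases h : pairAt x i ∈ P
    · simpa only [Function.comp_apply, flip, if_pos h] using hi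
    · simp only [Function.comp_apply, flip, if_neg h]
      exact hi.symm

theorem not_isFree_insert_of_maximal (hP : Maximal 𝔸.IsFree P) {q : A × A} (hq : q ∉ P) :
    ¬ 𝔸.IsFree (insert q P) :=
  fun h => hq (hP.2 h (Set.subset_insert q P) (Set.mem_insert q P))

theorem swap_mem_of_maximal_isFree (hP : Maximal 𝔸.IsFree P) {u v : A} (huv : (u, v) ∈ P) :
    (v, u) ∈ P :=
  hP.2 hP.1.union_preimage_swap Set.subset_union_left (Or.inr huv)

theorem closure_adjacentEq_eq_univ (hid : 𝔸.Idempotent) {k n : ℕ}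
    (hk : ∀ y : Fin k × Fin 2 → A, y ∈ 𝔸.diagClosure (Fin k)) (hkn : k * 2 ≤ n + 1) :
    𝔸.closure (adjacentEq A n) = Set.univ := by
  refine Set.eq_univ_of_forall fun x => ?_
  -- `finProdFinEquiv (i, b) = b + 2 * i`: pair `i` sits at the adjacent positions `2i, 2i + 1`.
  let e : Fin (n + 1) → (Fin k × Fin 2) ⊕ A := fun t =>
    if h : t.val < k * 2 then Sum.inl (finProdFinEquiv.symm ⟨t, h⟩) else Sum.inr (x t)
  have hx : substitute e (x ∘ Fin.castLE hkn ∘ finProdFinEquiv) = x := by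
    funext t
    by_cases h : t.val < k * 2
    · simp only [substitute, e, dif_pos h, Sum.elim_inl, comp_apply, Equiv.apply_symm_apply]
      rfl
    · simp only [substitute, e, dif_neg h, Sum.elim_inr, id]
  rw [← hx]
  refine substitute_mem_closure hid e (fun y hy => ?_) (hk _)
  obtain ⟨i, hi⟩ := hy
  have h2i : 2 * i.val + 1 < k * 2 := by omega
  refine subset_closure ⟨⟨2 * i, by omega⟩, ?_⟩
  have h0 : finProdFinEquiv.symm ⟨2 * i.val, by omega⟩ = (i, (0 : Fin 2)) := by
    rw [Equiv.symm_apply_eq]; ext; simp [mul_comm]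
  have h1 : finProdFinEquiv.symm ⟨2 * i.val + 1, h2i⟩ = (i, (1 : Fin 2)) := by
    rw [Equiv.symm_apply_eq]; ext; simp [mul_comm, add_comm]
  show (e ⟨2 * i, by omega⟩).elim y id = (e ⟨2 * i + 1, by omega⟩).elim y id
  simp only [e, dif_pos h2i, dif_pos (by omega : 2 * i.val < k * 2), h0, h1]
  exact hi

/-- By pigeonhole, in a long tuple some pair repeats often enough to host a witness of its
non-freeness. -/
theorem exists_forall_mem_diagClosure [Fintype A] (hid : 𝔸.Idempotent)
    (h : ∀ p : A × A, ¬ 𝔸.IsFree {p}) :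
    ∃ k, ∀ y : Fin k × Fin 2 → A, y ∈ 𝔸.diagClosure (Fin k) := by
  classical
  have hwit : ∀ p : A × A, ∃ (ι : Type) (_ : Finite ι) (x : ι × Fin 2 → A),
      (∀ i, pairAt x i = p) ∧ x ∈ 𝔸.diagClosure ι := by
    intro p
    simpa [IsFree] using h p
  choose ι hι x hxp hx using hwit
  let K := univ.sup fun p => Nat.card (ι p)
  refine ⟨Fintype.card (A × A) * K + 1, fun y => ?_⟩
  obtain ⟨p, hp⟩ := Fintype.exists_lt_card_fiber_of_mul_lt_card (f := pairAt y) (n := K)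
    (by simp)
  have := Fintype.ofFinite (ι p)
  have hcard : Fintype.card (ι p) ≤ Fintype.card {i // pairAt y i = p} := by
    rw [Fintype.card_subtype, ← Nat.card_eq_fintype_card]
    exact (le_sup (f := fun p => Nat.card (ι p)) (mem_univ p)).trans hp.le
  obtain ⟨g⟩ := Embedding.nonempty_of_card_le hcard
  exact mem_diagClosure_of_injective hid (Subtype.val_injective.comp g.injective) (hx p)
    fun i => (g i).2.trans (hxp p i).symm

theorem exists_isFree_singleton [Fintype A] (hid : 𝔸.Idempotent) (hEGP : 𝔸.EGP) :
    ∃ p : A × A, 𝔸.IsFree {p} := by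
  by_contra! h
  obtain ⟨k, hk⟩ := exists_forall_mem_diagClosure hid h
  obtain ⟨n, hn, hne⟩ := exists_closure_adjacentEq_ne_univ hEGP (k * 2)
  exact hne (closure_adjacentEq_eq_univ hid hk (by omega))

theorem exists_maximal_isFree [Fintype A] (hid : 𝔸.Idempotent) (hEGP : 𝔸.EGP) :
    ∃ P, Maximal 𝔸.IsFree P ∧ P.Nonempty := by
  obtain ⟨p, hp⟩ := exists_isFree_singleton hid hEGP
  obtain ⟨P, hpP, hP⟩ := Finite.exists_le_maximal hp
  exact ⟨P, hP, p, hpP rfl⟩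

theorem exists_coord_of_maximal_isFree (hid : 𝔸.Idempotent) (hP : Maximal 𝔸.IsFree P)
    (o : 𝔸.ι) :
    ∃ j, ∀ u w : Fin (𝔸.arity o) → A, (u j, w j) ∉ P → (𝔸.op o u, 𝔸.op o w) ∉ P := by
  classical
  by_contra! h
  choose U W hUW hUWP using h
  have hwit : ∀ j, ∃ (ι : Type) (_ : Finite ι) (x : ι × Fin 2 → A),
      (∀ q, pairAt x q ∈ insert (U j j, W j j) P) ∧ x ∈ 𝔸.diagClosure ι := by
    intro j
    simpa [IsFree] using not_isFree_insert_of_maximal hP (hUW j)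
  choose ι hι x hxP hx using hwit
  -- Block `j'` of the `j`-th tuple `T j` agrees with `x j'` on the pairs in `P` and is
  -- `(U j' j, W j' j)` elsewhere; so block `j` of `T j` is `x j`, while applying the operation
  -- to the `T j` gives a member of `Ω` all of whose pairs lie in `P`.
  let Z : (Σ j, ι j) → Fin (𝔸.arity o) → A × A := fun jq j =>
    if pairAt (x jq.1) jq.2 ∈ P then pairAt (x jq.1) jq.2 else (U jq.1 j, W jq.1 j)
  have hZ_self : ∀ j q, Z ⟨j, q⟩ j = pairAt (x j) q := by
    intro j q
    by_cases hq : pairAt (x j) q ∈ P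
    · simp only [Z, if_pos hq]
    · simp only [Z, if_neg hq]
      exact ((hxP j q).resolve_right hq).symm
  have hZ_op : ∀ jq, (𝔸.op o fun j => (Z jq j).1, 𝔸.op o fun j => (Z jq j).2) ∈ P := by
    intro jq
    by_cases hq : pairAt (x jq.1) jq.2 ∈ P
    · simp only [Z, if_pos hq]
      rwa [hid o, hid o]
    · simpa only [Z, if_neg hq] using hUWP jq.1
  let T : Fin (𝔸.arity o) → (Σ j, ι j) × Fin 2 → A := fun j jqb =>
    if jqb.2 = 0 then (Z jqb.1 j).1 else (Z jqb.1 j).2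
  have hT : ∀ j, T j ∈ 𝔸.diagClosure _ := fun j =>
    mem_diagClosure_of_injective hid sigma_mk_injective (hx j) fun q => by
      simpa [pairAt, T] using hZ_self j q
  exact hP.1 _ (fun t => 𝔸.op o fun j => T j t) (fun jq => by simpa [pairAt, T] using hZ_op jq)
    (isSubpower_closure o T hT)

theorem abProjective_of_maximal_isFree (hid : 𝔸.Idempotent) (hP : Maximal 𝔸.IsFree P) (b : A)
    (o : 𝔸.ι) :
    ABProjective {z | (z, b) ∉ P} {z | ∃ c, (c, b) ∈ P ∧ (z, c) ∉ P} (𝔸.op o) := by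
  obtain ⟨j, hj⟩ := exists_coord_of_maximal_isFree hid hP o
  have hleft : ∀ c u, (u j, c) ∉ P → (𝔸.op o u, c) ∉ P := fun c u h =>
    hid o c ▸ hj u (fun _ => c) h
  refine ⟨j, fun u S hS hu => ?_⟩
  rcases hS with rfl | rfl
  · exact hleft b u hu
  · obtain ⟨c, hcb, huc⟩ := hu
    exact ⟨c, hcb, hleft c u huc⟩

end MyAlgebra

theorem ABProjective.preserves_sigmaRel {A : Type} {α β : Set A} {s : ℕ}
    {f : (Fin s → A) → A} (hf : ABProjective α β f) (n : ℕ) :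
    Preserves f (sigmaRel (α ×ˢ α ∪ β ×ˢ β) n) := by
  intro γ hγ
  obtain ⟨j, hj⟩ := hf
  obtain ⟨i, hi, hρ⟩ := hγ j
  refine ⟨i, hi, ?_⟩
  rcases hρ with ⟨h0, h1⟩ | ⟨h0, h1⟩
  · exact Or.inl ⟨hj _ α (Or.inl rfl) h0, hj _ α (Or.inl rfl) h1⟩
  · exact Or.inr ⟨hj _ β (Or.inr rfl) h0, hj _ β (Or.inr rfl) h1⟩

/-- a finite idempotent algebra with EGP admits `α, β ⊊ A` with `α ∪ β = A`
such that for `ρ = (α × α) ∪ (β × β)` every `σ_n` is invariant. -/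
theorem stmt_14 {A : Type} [Fintype A] (𝔸 : MyAlgebra A) (hid : 𝔸.Idempotent)
    (hEGP : 𝔸.EGP) :
    ∃ α β : Set A, α ≠ Set.univ ∧ β ≠ Set.univ ∧ α ∪ β = Set.univ ∧
      ∀ n : ℕ, 𝔸.Closed (sigmaRel (α ×ˢ α ∪ β ×ˢ β) n) := by
  obtain ⟨P, hP, ⟨a, b⟩, hab⟩ := MyAlgebra.exists_maximal_isFree hid hEGP
  refine ⟨{z | (z, b) ∉ P}, {z | ∃ c, (c, b) ∈ P ∧ (z, c) ∉ P}, ?_, ?_, ?_, fun n o =>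
    (MyAlgebra.abProjective_of_maximal_isFree hid hP b o).preserves_sigmaRel n⟩
  · exact Set.ne_univ_iff_exists_notMem _ |>.mpr ⟨a, fun h => h hab⟩
  · exact Set.ne_univ_iff_exists_notMem _ |>.mpr
      ⟨b, fun ⟨c, hcb, hbc⟩ => hbc (MyAlgebra.swap_mem_of_maximal_isFree hP hcb)⟩
  · refine Set.eq_univ_of_forall fun z => ?_
    by_cases hz : (z, b) ∈ P
    · exact Or.inr ⟨z, hz, hP.1.mk_self_notMem z⟩
    · exact Or.inl hz
end

section
/- Let A be a finite set, let α, β ⊊ A with α ∪ β = A, let ρ = (α × α) ∪ (β × β), and for each n let σ_n ⊆ A^{2n} be defined by σ_n(x_1,…,x_{2n}) ⇔ ρ(x_1,x_2) ∨ ρ(x_3,x_4) ∨ … ∨ ρ(x_{2n−1},x_{2n}). If an operation f : A^s → A is αβ-projective, then f preserves σ_n for every n. -/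
/-- an `αβ`-projective operation preserves every `σ_n` built from
`ρ = (α × α) ∪ (β × β)`. -/
theorem stmt_15 {A : Type} [Fintype A] (α β : Set A)
    (hα : α ≠ Set.univ) (hβ : β ≠ Set.univ) (hαβ : α ∪ β = Set.univ)
    {s : ℕ} (f : (Fin s → A) → A) (hf : ABProjective α β f) :
    ∀ n : ℕ, Preserves f (sigmaRel (α ×ˢ α ∪ β ×ˢ β) n) := by
  intro n γ hγ
  obtain ⟨j, hj⟩ := hf
  obtain ⟨i, h, hρ⟩ := hγ j
  refine ⟨i, h, ?_⟩
  rcases hρ with ⟨h1, h2⟩ | ⟨h1, h2⟩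
  · exact Or.inl ⟨hj _ α (Or.inl rfl) h1, hj _ α (Or.inl rfl) h2⟩
  · exact Or.inr ⟨hj _ β (Or.inr rfl) h1, hj _ β (Or.inr rfl) h2⟩
end

section
/- Let A be a finite set, let α, β ⊊ A with α ∪ β = A, let ρ = (α × α) ∪ (β × β), and for each n let σ_n ⊆ A^{2n} be defined by σ_n(x_1,…,x_{2n}) ⇔ ρ(x_1,x_2) ∨ ρ(x_3,x_4) ∨ … ∨ ρ(x_{2n−1},x_{2n}). If an idempotent operation f : A^s → A preserves σ_n for every n, then f is αβ-projective. -/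
/-- an idempotent operation preserving every `σ_n` built from
`ρ = (α × α) ∪ (β × β)` is `αβ`-projective. -/
theorem stmt_16 {A : Type} [Fintype A] (α β : Set A)
    (hα : α ≠ Set.univ) (hβ : β ≠ Set.univ) (hαβ : α ∪ β = Set.univ)
    {s : ℕ} (f : (Fin s → A) → A) (hidem : ∀ a : A, f (fun _ => a) = a)
    (hf : ∀ n : ℕ, Preserves f (sigmaRel (α ×ˢ α ∪ β ×ˢ β) n)) :
    ABProjective α β f := by
  classical
  by_contra hcon
  simp only [ABProjective, not_exists] at hcon
  push_neg at hcon
  obtain ⟨u, hu⟩ := Set.ne_univ_iff_exists_notMem α |>.mp hα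
  obtain ⟨v, hv⟩ := Set.ne_univ_iff_exists_notMem β |>.mp hβ
  have huβ : u ∈ β := by
    have : u ∈ α ∪ β := by rw [hαβ]; exact Set.mem_univ u
    rcases this with h | h
    · exact absurd h hu
    · exact h
  have hvα : v ∈ α := by
    have : v ∈ α ∪ β := by rw [hαβ]; exact Set.mem_univ v
    rcases this with h | h
    · exact h
    · exact absurd h hv
  choose a S hS hmem hnot using hcon
  set c : Fin s → A := fun j => if S j = α then v else u with hc
  set γ : Fin s → Fin (2 * s) → A := fun j t =>
    if (t : ℕ) % 2 = 0 then a ⟨(t : ℕ) / 2, by have := t.isLt; omega⟩ j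
    else c ⟨(t : ℕ) / 2, by have := t.isLt; omega⟩ with hγ
  have heven : ∀ (i : ℕ) (hi : i < s) (h : 2 * i < 2 * s) (j : Fin s),
      γ j ⟨2 * i, h⟩ = a ⟨i, hi⟩ j := by
    intro i hi h j
    simp only [hγ]
    have h1 : (2 * i) % 2 = 0 := by omega
    have h2 : (2 * i) / 2 = i := by omega
    simp [h1, h2]
  have hodd : ∀ (i : ℕ) (hi : i < s) (h : 2 * i + 1 < 2 * s) (j : Fin s),
      γ j ⟨2 * i + 1, h⟩ = c ⟨i, hi⟩ := by
    intro i hi h j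
    simp only [hγ]
    have h1 : (2 * i + 1) % 2 = 1 := by omega
    have h2 : (2 * i + 1) / 2 = i := by omega
    simp [h1, h2]
  have hrow : ∀ j, γ j ∈ sigmaRel (α ×ˢ α ∪ β ×ˢ β) s := by
    intro j
    have hj := j.isLt
    refine ⟨j, by omega, ?_⟩
    rw [heven j hj (by omega) j, hodd j hj (by omega) j]
    have hmj := hmem j
    by_cases hSα : S j = α
    · rw [hSα] at hmj
      left
      refine ⟨?_, ?_⟩ <;> simp [hc, hSα, hmj, hvα, Fin.eta]
    · have hSβ : S j = β := by
        rcases hS j with h | h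
        · exact absurd h hSα
        · exact h
      rw [hSβ] at hmj
      right
      refine ⟨?_, ?_⟩ <;> simp [hc, hSα, hmj, huβ, Fin.eta]
  obtain ⟨i, hlt, hρ⟩ := hf s γ hrow
  have hi : i < s := by omega
  have hcolA : (fun j => γ j ⟨2 * i, by omega⟩) = a ⟨i, hi⟩ := by
    funext j; exact heven i hi (by omega) j
  have hcolB : (fun j => γ j ⟨2 * i + 1, hlt⟩) = fun _ => c ⟨i, hi⟩ := by
    funext j; exact hodd i hi hlt j
  simp only at hρ
  rw [hcolA, hcolB, hidem] at hρ
  by_cases hSα : S ⟨i, hi⟩ = α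
  · have hnf : f (a ⟨i, hi⟩) ∉ α := hSα ▸ hnot ⟨i, hi⟩
    have hcv : c ⟨i, hi⟩ = v := by simp [hc, hSα]
    rcases hρ with h | h
    · exact hnf h.1
    · rw [hcv] at h; exact hv h.2
  · have hSβ : S ⟨i, hi⟩ = β := by
      rcases hS ⟨i, hi⟩ with h | h
      · exact absurd h hSα
      · exact h
    have hnf : f (a ⟨i, hi⟩) ∉ β := hSβ ▸ hnot ⟨i, hi⟩
    have hcu : c ⟨i, hi⟩ = u := by simp [hc, hSα]
    rcases hρ with h | h
    · rw [hcu] at h; exact hu h.2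
    · exact hnf h.1
end
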